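/- arXiv:1311.4362 — 9 statements merged into one kernel-verified Lean document; each statement's English description precedes it below -/
import Mathlib

section
/- The optimal value of the regularized square-root LASSO problem min over x in R^n of ||A x - b||_2 + sum_i λ_i |x_i| equals the optimal value of the dual problem: maximize -b^T u subject to ||u||_2 ≤ 1 and |a_i^T u| ≤ λ_i for all i, where a_i are the columns of A. -/
noncomputable def norm2 {m : ℕ} (v : Fin m → ℝ) : ℝ := Real.sqrt (∑ k, v k ^ 2)
noncomputable def dot {m : ℕ} (u v : Fin m → ℝ) : ℝ := ∑ k, u k * v k

/-!
Weak duality is Cauchy–Schwarz together with `-x_i ⟪a_i, u⟫ ≤ λ_i |x_i|`. For the converse,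
perturb the residual: if `p` is the primal value, the set of pairs `(y, t)` with
`‖A x - b + y‖ + ∑ λ_i |x_i| < t` for some `x` is convex, open, and misses `(0, p)`. A separating
functional from Hahn–Banach has positive `t`-coefficient, so (after Riesz) there is `u` with
`p + ⟪u, y⟫ ≤ ‖A x - b + y‖ + ∑ λ_i |x_i|` for all `x, y`. Substituting `z = A x - b + y` makes the
difference of the two sides positively homogeneous in `(x, z)` up to a constant; boundedness below
then forces `‖u‖ ≤ 1` and `|⟪a_i, u⟫| ≤ λ_i`, while `x = 0, y = b` gives `p ≤ -⟪b, u⟫`.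
-/

open Set
open scoped RealInnerProductSpace

lemma nonneg_of_forall_pos_le_mul {c d : ℝ} (h : ∀ s > 0, c ≤ s * d) : 0 ≤ d := by
  by_contra! hd
  have hs := h ((|c| + 1) / -d) (div_pos (by positivity) (neg_pos.mpr hd))
  rw [div_mul_eq_mul_div, mul_div_assoc, div_neg, div_self hd.ne] at hs
  linarith [neg_abs_le c]

lemma csInf_eq_csSup_of_forall_le {α : Type*} [ConditionallyCompleteLattice α] {P D : Set α}
    (hP : P.Nonempty) (hD : D.Nonempty) (hle : ∀ d ∈ D, ∀ q ∈ P, d ≤ q)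
    (hlb : ∀ p ∈ lowerBounds P, ∃ d ∈ D, p ≤ d) : sInf P = sSup D := by
  obtain ⟨d₀, hd₀⟩ := hD
  obtain ⟨q₀, hq₀⟩ := hP
  obtain ⟨d, hd, hPd⟩ := hlb (sInf P) fun q hq => csInf_le ⟨d₀, hle d₀ hd₀⟩ hq
  exact le_antisymm (hPd.trans (le_csSup ⟨q₀, fun d hd => hle d hd q₀ hq₀⟩ hd))
    (csSup_le ⟨d₀, hd₀⟩ fun d hd => le_csInf ⟨q₀, hq₀⟩ (hle d hd))

/-- When `p` is the infimum of `F (·, 0)`, `ℓ` is a subgradient at `0` of the value function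
`y ↦ ⨅ x, F (x, y)`. -/
theorem ConvexOn.exists_continuousLinearMap_add_le {X E : Type*} [AddCommGroup X] [Module ℝ X]
    [Nonempty X] [TopologicalSpace E] [AddCommGroup E] [Module ℝ E] [IsTopologicalAddGroup E]
    [ContinuousSMul ℝ E] {F : X × E → ℝ} (hF : ConvexOn ℝ univ F)
    (hFcont : ∀ x, Continuous fun y => F (x, y)) {p : ℝ} (hp : ∀ x, p ≤ F (x, 0)) :
    ∃ ℓ : E →L[ℝ] ℝ, ∀ x y, p + ℓ y ≤ F (x, y) := by
  set S : Set (E × ℝ) := {q | ∃ x, F (x, q.1) < q.2}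
  have hS_eq : S = (LinearMap.prodMap (LinearMap.snd ℝ X E) LinearMap.id) ''
      {r : (X × E) × ℝ | r.1 ∈ univ ∧ F r.1 < r.2} := by
    ext ⟨y, t⟩
    simp [S]
  have hS_open : IsOpen S := by
    simp only [S, ofPred_exists]
    exact isOpen_iUnion fun x => isOpen_lt ((hFcont x).comp continuous_fst) continuous_snd
  have hp_notMem : ((0 : E), p) ∉ S := fun ⟨x, hx⟩ => (hp x).not_gt hx
  obtain ⟨φ, hφ⟩ := geometric_hahn_banach_point_open
    (hS_eq ▸ hF.convex_strict_epigraph.linear_image _) hS_open hp_notMem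
  set α := φ (0, 1)
  have hφ_apply : ∀ y t, φ (y, t) = φ (y, 0) + t * α := by
    intro y t
    rw [← smul_eq_mul, ← map_smul, ← map_add, Prod.smul_mk, smul_zero, smul_eq_mul, mul_one,
      Prod.mk_add_mk, add_zero, zero_add]
  have hφ0 : φ (0, 0) = 0 := map_zero φ
  have hα : 0 < α := by
    obtain ⟨x⟩ := ‹Nonempty X›
    set t := max p (F (x, 0)) + 1
    have h := hφ (0, t) ⟨x, by simp only [t]; linarith [le_max_right p (F (x, 0))]⟩
    rw [hφ_apply 0 p, hφ_apply 0 t, hφ0] at h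
    nlinarith [le_max_left p (F (x, 0))]
  refine ⟨-α⁻¹ • φ.comp (ContinuousLinearMap.inl ℝ E ℝ), fun x y => ?_⟩
  refine le_of_forall_pos_lt_add fun ε hε => ?_
  have h := hφ (y, F (x, y) + ε) ⟨x, by simp [hε]⟩
  rw [hφ_apply 0 p, hφ_apply y, hφ0, zero_add] at h
  have : p < α⁻¹ * φ (y, 0) + (F (x, y) + ε) := by
    rw [← mul_lt_mul_iff_of_pos_right hα]; field_simp; linarith
  change p + -α⁻¹ * φ (y, 0) < F (x, y) + ε
  linarith

section SqrtLasso

variable {ι E : Type*} [Fintype ι] [NormedAddCommGroup E] [InnerProductSpace ℝ E]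
  (a : ι → E) (b : E) {lam : ι → ℝ}

lemma convexOn_sum_mul_abs (hlam : ∀ i, 0 ≤ lam i) :
    ConvexOn ℝ univ fun x : ι → ℝ => ∑ i, lam i * |x i| := by
  refine ⟨convex_univ, fun x _ y _ s t hs ht _ => ?_⟩
  simp only [smul_eq_mul, Finset.mul_sum, ← Finset.sum_add_distrib]
  refine Finset.sum_le_sum fun i _ => ?_
  calc lam i * |s * x i + t * y i| ≤ lam i * (s * |x i| + t * |y i|) := by
        gcongr
        · exact hlam i
        · exact (abs_add_le _ _).trans_eq
            (by rw [abs_mul, abs_mul, abs_of_nonneg hs, abs_of_nonneg ht])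
    _ = s * (lam i * |x i|) + t * (lam i * |y i|) := by ring

lemma convexOn_norm_sum_smul_sub_add :
    ConvexOn ℝ univ fun q : (ι → ℝ) × E => ‖∑ i, q.1 i • a i - b + q.2‖ := by
  have := ((convexOn_norm (E := E) convex_univ).translate_right (-b)).comp_linearMap
    (Fintype.linearCombination ℝ a ∘ₗ LinearMap.fst ℝ _ E + LinearMap.snd ℝ _ E)
  rw [preimage_univ, preimage_univ] at this
  refine this.congr fun q _ => ?_
  simp only [Function.comp_apply, LinearMap.add_apply, LinearMap.coe_comp,
    LinearMap.coe_fst, LinearMap.coe_snd, Fintype.linearCombination_apply]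
  abel_nf

lemma sqrtLasso_weak_duality {u : E} (hu : ‖u‖ ≤ 1) (hua : ∀ i, |⟪a i, u⟫| ≤ lam i)
    (x : ι → ℝ) : -⟪b, u⟫ ≤ ‖∑ i, x i • a i - b‖ + ∑ i, lam i * |x i| := by
  have hres : ⟪∑ i, x i • a i - b, u⟫ ≤ ‖∑ i, x i • a i - b‖ :=
    (real_inner_le_norm _ _).trans (mul_le_of_le_one_right (norm_nonneg _) hu)
  have hreg : -∑ i, x i * ⟪a i, u⟫ ≤ ∑ i, lam i * |x i| := by
    rw [← Finset.sum_neg_distrib]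
    refine Finset.sum_le_sum fun i _ => ?_
    calc -(x i * ⟪a i, u⟫) ≤ |x i| * |⟪a i, u⟫| := abs_mul (x i) _ ▸ neg_le_abs _
      _ ≤ lam i * |x i| := by rw [mul_comm]; gcongr; exact hua i
  have hsplit : ⟪∑ i, x i • a i - b, u⟫ = ∑ i, x i * ⟪a i, u⟫ - ⟪b, u⟫ := by
    simp only [inner_sub_left, sum_inner, real_inner_smul_left]
  linarith

lemma norm_le_one_and_abs_inner_le_of_forall_le {u : E} {c : ℝ}
    (h : ∀ (x : ι → ℝ) (z : E), c + ⟪u, z⟫ ≤ ‖z‖ + ∑ i, lam i * |x i| + ⟪u, ∑ i, x i • a i⟫) :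
    ‖u‖ ≤ 1 ∧ ∀ i, |⟪a i, u⟫| ≤ lam i := by
  have hnorm : 0 ≤ ‖u‖ - ‖u‖ ^ 2 := nonneg_of_forall_pos_le_mul (c := c) fun s hs => by
    have := h 0 (s • u)
    simp only [inner_smul_right, real_inner_self_eq_norm_sq, norm_smul, Real.norm_of_nonneg hs.le,
      Pi.zero_apply, abs_zero, mul_zero, Finset.sum_const_zero, zero_smul, inner_zero_right,
      add_zero] at this
    linarith [mul_sub s ‖u‖ (‖u‖ ^ 2)]
  have hcol : ∀ i t, c ≤ lam i * |t| + t * ⟪a i, u⟫ := fun i t => by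
    classical
    simpa [Pi.single_apply, apply_ite, inner_smul_right, real_inner_comm] using
      h (Pi.single i t) 0
  refine ⟨by nlinarith [norm_nonneg u], fun i => abs_le.mpr ⟨?_, ?_⟩⟩
  · have := nonneg_of_forall_pos_le_mul fun s hs => (hcol i s).trans_eq
      (by rw [abs_of_pos hs]; ring : lam i * |s| + s * ⟪a i, u⟫ = s * (lam i + ⟪a i, u⟫))
    linarith
  · have := nonneg_of_forall_pos_le_mul fun s hs => (hcol i (-s)).trans_eq
      (by rw [abs_neg, abs_of_pos hs]; ring :
        lam i * |-s| + -s * ⟪a i, u⟫ = s * (lam i - ⟪a i, u⟫))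
    linarith

lemma sqrtLasso_exists_dual_ge [CompleteSpace E] (hlam : ∀ i, 0 ≤ lam i) {p : ℝ}
    (hp : ∀ x : ι → ℝ, p ≤ ‖∑ i, x i • a i - b‖ + ∑ i, lam i * |x i|) :
    ∃ u : E, ‖u‖ ≤ 1 ∧ (∀ i, |⟪a i, u⟫| ≤ lam i) ∧ p ≤ -⟪b, u⟫ := by
  obtain ⟨ℓ, hℓ⟩ := ConvexOn.exists_continuousLinearMap_add_le
    ((convexOn_norm_sum_smul_sub_add a b).add
      ((convexOn_sum_mul_abs hlam).comp_linearMap (LinearMap.fst ℝ _ E)))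
    (fun x => by simp only [Pi.add_apply, Function.comp_apply, LinearMap.fst_apply]; fun_prop)
    fun x => by simpa using hp x
  set u := (InnerProductSpace.toDual ℝ E).symm ℓ
  have hℓu : ∀ y, ℓ y = ⟪u, y⟫ := fun y => InnerProductSpace.toDual_symm_apply.symm
  have key : ∀ (x : ι → ℝ) (z : E),
      (p + ⟪u, b⟫) + ⟪u, z⟫ ≤ ‖z‖ + ∑ i, lam i * |x i| + ⟪u, ∑ i, x i • a i⟫ := by
    intro x z
    have := hℓ x (z + b - ∑ i, x i • a i)
    simp only [Pi.add_apply, Function.comp_apply, LinearMap.fst_apply, hℓu, inner_sub_right,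
      inner_add_right, show ∑ i, x i • a i - b + (z + b - ∑ i, x i • a i) = z by abel] at this
    linarith
  obtain ⟨hu, hua⟩ := norm_le_one_and_abs_inner_le_of_forall_le a key
  refine ⟨u, hu, hua, ?_⟩
  have := key 0 0
  simp only [inner_zero_right, norm_zero, Pi.zero_apply, abs_zero, mul_zero,
    Finset.sum_const_zero, zero_smul, add_zero] at this
  rw [real_inner_comm]
  linarith

theorem sqrtLasso_strong_duality [CompleteSpace E] (hlam : ∀ i, 0 ≤ lam i) :
    sInf {v | ∃ x : ι → ℝ, v = ‖∑ i, x i • a i - b‖ + ∑ i, lam i * |x i|}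
      = sSup {v | ∃ u : E, ‖u‖ ≤ 1 ∧ (∀ i, |⟪a i, u⟫| ≤ lam i) ∧ v = -⟪b, u⟫} := by
  refine csInf_eq_csSup_of_forall_le ⟨_, 0, rfl⟩ ⟨_, 0, by simp, by simpa using hlam, rfl⟩
    ?_ fun p hp => ?_
  · rintro _ ⟨u, hu, hua, rfl⟩ _ ⟨x, rfl⟩
    exact sqrtLasso_weak_duality a b hu hua x
  · obtain ⟨u, hu, hua, hpu⟩ := sqrtLasso_exists_dual_ge a b hlam fun x => hp ⟨x, rfl⟩
    exact ⟨_, ⟨u, hu, hua, rfl⟩, hpu⟩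

end SqrtLasso

lemma norm2_eq_norm_toLp {m : ℕ} (v : Fin m → ℝ) : norm2 v = ‖WithLp.toLp 2 v‖ := by
  simp [norm2, EuclideanSpace.norm_eq]

lemma dot_eq_inner_toLp {m : ℕ} (u v : Fin m → ℝ) :
    dot u v = ⟪WithLp.toLp 2 u, WithLp.toLp 2 v⟫ := by
  simp [dot, PiLp.inner_apply, mul_comm]

lemma toLp_mulVec {m n : ℕ} (A : Matrix (Fin m) (Fin n) ℝ) (x : Fin n → ℝ) :
    WithLp.toLp 2 (A.mulVec x) = ∑ i, x i • WithLp.toLp 2 (fun k => A k i) := by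
  ext k
  simp [Matrix.mulVec, dotProduct, mul_comm]

theorem rsqrtLASSO_strong_duality {m n : ℕ}
    (A : Matrix (Fin m) (Fin n) ℝ) (b : Fin m → ℝ)
    (lam : Fin n → ℝ) (hlam : ∀ i, 0 ≤ lam i) :
    sInf {v : ℝ | ∃ x : Fin n → ℝ,
        v = norm2 (A.mulVec x - b) + ∑ i, lam i * |x i|}
      = sSup {v : ℝ | ∃ u : Fin m → ℝ, norm2 u ≤ 1 ∧
          (∀ i, |dot (fun k => A k i) u| ≤ lam i) ∧ v = -(dot b u)} := by
  simp only [norm2_eq_norm_toLp, dot_eq_inner_toLp, WithLp.toLp_sub, toLp_mulVec]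
  rw [sqrtLasso_strong_duality _ _ hlam]
  congr 1
  ext v
  exact (WithLp.equiv 2 (Fin m → ℝ)).exists_congr_left
end

section
/- The optimal value of the nonnegative regularized square-root LASSO problem min over x ≥ 0 of ||A x - b||_2 + λ^T x equals the optimal value of the dual problem: maximize -b^T u subject to ||u||_2 ≤ 1 and a_i^T u + λ_i ≥ 0 for all i. -/
lemma sum_sq_nonneg' {m : ℕ} (v : Fin m → ℝ) : (0:ℝ) ≤ ∑ k, v k ^ 2 :=
  Finset.sum_nonneg fun _ _ => sq_nonneg _

lemma norm2_nonneg' {m : ℕ} (v : Fin m → ℝ) : 0 ≤ norm2 v := Real.sqrt_nonneg _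

lemma sq_norm2 {m : ℕ} (v : Fin m → ℝ) : norm2 v ^ 2 = ∑ k, v k ^ 2 :=
  Real.sq_sqrt (sum_sq_nonneg' v)

lemma cauchy' {m : ℕ} (u v : Fin m → ℝ) : dot u v ≤ norm2 u * norm2 v :=
  Real.sum_mul_le_sqrt_mul_sqrt _ u v

lemma sqrt_le_aux {z s : ℝ} (hz : 0 ≤ z) :
    Real.sqrt z * (2 * s) ≤ z + s ^ 2 := by
  nlinarith [sq_nonneg (Real.sqrt z - s), Real.sq_sqrt hz, Real.sqrt_nonneg z]

set_option maxHeartbeats 1000000 in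
lemma approx_dual {m n : ℕ} (A : Matrix (Fin m) (Fin n) ℝ) (b : Fin m → ℝ)
    (lam : Fin n → ℝ) (hlam : ∀ i, 0 ≤ lam i) {δ : ℝ} (hδ : 0 < δ) (p : ℝ)
    (hp : ∀ x : Fin n → ℝ, (∀ i, 0 ≤ x i) → p ≤ norm2 (A.mulVec x - b) + ∑ i, lam i * x i) :
    ∃ u : Fin m → ℝ, norm2 u ≤ 1 ∧ (∀ i, -δ ≤ dot (fun k => A k i) u + lam i) ∧
      p - δ ≤ -(dot b u) := by
  classical
  set f : (Fin n → ℝ) → ℝ :=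
    fun x => Real.sqrt ((∑ k, (A.mulVec x - b) k ^ 2) + δ ^ 2) + ∑ i, (lam i + δ) * x i
    with hf
  have hcomp : ∀ k : Fin m, Continuous fun x : Fin n → ℝ => (A.mulVec x - b) k := by
    intro k
    simp only [Pi.sub_apply, Matrix.mulVec, dotProduct]
    exact (continuous_finset_sum _ fun i _ =>
      continuous_const.mul (continuous_apply i)).sub continuous_const
  have hfc : Continuous f :=
    (((continuous_finset_sum _ fun k _ => (hcomp k).pow 2).add continuous_const).sqrt).add
      (continuous_finset_sum _ fun i _ => continuous_const.mul (continuous_apply i))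
  have hf0 : 0 ≤ f 0 := by
    have e : f 0 = Real.sqrt ((∑ k, (A.mulVec 0 - b) k ^ 2) + δ ^ 2) := by
      simp [hf]
    rw [e]; positivity
  set R : ℝ := f 0 / δ with hR
  have hR0 : 0 ≤ R := div_nonneg hf0 hδ.le
  have hδR : δ * R = f 0 := by rw [hR]; field_simp
  set K : Set (Fin n → ℝ) := Set.Icc 0 (fun _ => R) with hK
  have hKc : IsCompact K := isCompact_Icc
  have hK0 : (0 : Fin n → ℝ) ∈ K := Set.mem_Icc.2 ⟨le_refl _, fun i => hR0⟩
  obtain ⟨xs, hxsK, hxsmin⟩ := hKc.exists_isMinOn ⟨0, hK0⟩ hfc.continuousOn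
  have hxs0 : ∀ i, 0 ≤ xs i := fun i => (Set.mem_Icc.1 hxsK).1 i
  have hglob : ∀ y : Fin n → ℝ, (∀ i, 0 ≤ y i) → f xs ≤ f y := by
    intro y hy
    by_cases hcase : ∀ i, y i ≤ R
    · exact hxsmin (Set.mem_Icc.2 ⟨fun i => hy i, fun i => hcase i⟩)
    · push_neg at hcase
      obtain ⟨i, hi⟩ := hcase
      have h1 : f xs ≤ f 0 := hxsmin hK0
      have h2 : δ * R ≤ (lam i + δ) * y i := by
        nlinarith [hlam i, hy i, hi, hδ, mul_le_mul_of_nonneg_left hi.le hδ.le,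
          mul_nonneg (hlam i) (hy i)]
      have h3 : (lam i + δ) * y i ≤ ∑ j, (lam j + δ) * y j :=
        Finset.single_le_sum (f := fun j => (lam j + δ) * y j)
          (fun j _ => mul_nonneg (by nlinarith [hlam j]) (hy j)) (Finset.mem_univ i)
      have h4 : 0 ≤ Real.sqrt ((∑ k, (A.mulVec y - b) k ^ 2) + δ ^ 2) := Real.sqrt_nonneg _
      have e : f y = Real.sqrt ((∑ k, (A.mulVec y - b) k ^ 2) + δ ^ 2)
          + ∑ j, (lam j + δ) * y j := rfl
      rw [e]
      linarith
  -- notation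
  set r : Fin m → ℝ := A.mulVec xs - b with hr
  set S2 : ℝ := ∑ k, r k ^ 2 with hS2
  have hS2nn : 0 ≤ S2 := sum_sq_nonneg' r
  set s : ℝ := Real.sqrt (S2 + δ ^ 2) with hs
  have hs_sq : s ^ 2 = S2 + δ ^ 2 := Real.sq_sqrt (by positivity)
  have hs_pos : 0 < s := Real.sqrt_pos.2 (by positivity)
  have hδs : δ ≤ s := by nlinarith [hs_sq, hS2nn, hs_pos, hδ]
  have hfxs : f xs = s + ∑ i, (lam i + δ) * xs i := rfl
  -- directional optimality
  have dir : ∀ v : Fin n → ℝ, (∀ t : ℝ, t ∈ Set.Icc (0:ℝ) 1 → ∀ i, 0 ≤ xs i + t * v i) →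
      0 ≤ dot (A.mulVec v) r + s * ∑ i, (lam i + δ) * v i := by
    intro v hv
    set w : Fin m → ℝ := A.mulVec v with hw
    set c : ℝ := dot w r with hc
    set W : ℝ := ∑ k, w k ^ 2 with hWdef
    have hW0 : 0 ≤ W := sum_sq_nonneg' w
    set L : ℝ := ∑ i, (lam i + δ) * v i with hL
    have expand : ∀ t : ℝ, ∑ k, (A.mulVec (xs + t • v) - b) k ^ 2
        = S2 + 2 * t * c + t ^ 2 * W := by
      intro t
      have e : A.mulVec (xs + t • v) - b = fun k => r k + t * w k := by
        funext k
        simp only [hr, hw, Matrix.mulVec_add, Matrix.mulVec_smul, Pi.add_apply,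
          Pi.sub_apply, Pi.smul_apply, smul_eq_mul]
        ring
      rw [e]
      have e2 : ∑ k, (r k + t * w k) ^ 2
          = (∑ k, r k ^ 2) + 2 * t * (∑ k, w k * r k) + t ^ 2 * (∑ k, w k ^ 2) := by
        rw [Finset.mul_sum, Finset.mul_sum, ← Finset.sum_add_distrib, ← Finset.sum_add_distrib]
        exact Finset.sum_congr rfl fun k _ => by ring
      rw [e2, hS2, hc, hWdef]
      simp only [dot]
    have keyineq : ∀ t : ℝ, t ∈ Set.Icc (0:ℝ) 1 →
        0 ≤ 2 * t * c + 2 * s * (t * L) + t ^ 2 * W := by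
      intro t ht
      have hy : ∀ i, 0 ≤ (xs + t • v) i := by
        intro i
        simpa [smul_eq_mul] using hv t ht i
      have h5 := hglob (xs + t • v) hy
      rw [hfxs] at h5
      have e0 : f (xs + t • v) = Real.sqrt ((∑ k, (A.mulVec (xs + t • v) - b) k ^ 2) + δ ^ 2)
          + ∑ i, (lam i + δ) * (xs i + t * v i) := rfl
      have esum : ∑ i, (lam i + δ) * (xs i + t * v i)
          = (∑ i, (lam i + δ) * xs i) + t * L := by
        rw [hL, Finset.mul_sum, ← Finset.sum_add_distrib]
        exact Finset.sum_congr rfl fun i _ => by ring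
      rw [e0, expand t, esum] at h5
      have hz : 0 ≤ S2 + 2 * t * c + t ^ 2 * W := by
        rw [← expand t]; exact sum_sq_nonneg' _
      have hsl := sqrt_le_aux (s := s) (z := (S2 + 2 * t * c + t ^ 2 * W) + δ ^ 2) (by positivity)
      have h6 : s - t * L ≤ Real.sqrt ((S2 + 2 * t * c + t ^ 2 * W) + δ ^ 2) := by linarith
      nlinarith [mul_le_mul_of_nonneg_right h6 (by positivity : (0:ℝ) ≤ 2 * s), hsl, hs_sq]
    by_contra hneg
    push_neg at hneg
    set G : ℝ := c + s * L with hG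
    have hGneg : G < 0 := by
      have : dot (A.mulVec v) r = c := by rw [hc, hw]
      rw [hG]; nlinarith [hneg, this]
    have hW1 : (0:ℝ) < W + 1 := by linarith
    set t : ℝ := min 1 (-G / (W + 1)) with htdef
    have htpos : 0 < t := lt_min one_pos (div_pos (by linarith) hW1)
    have ht1 : t ≤ 1 := min_le_left _ _
    have ht2 : t ≤ -G / (W + 1) := min_le_right _ _
    have h7 := keyineq t ⟨htpos.le, ht1⟩
    have h7' : 0 ≤ 2 * t * G + t ^ 2 * W := by
      have e : 2 * t * c + 2 * s * (t * L) + t ^ 2 * W = 2 * t * G + t ^ 2 * W := by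
        rw [hG]; ring
      linarith [e ▸ h7]
    have h8 : t * W ≤ -G := by
      calc t * W ≤ (-G / (W + 1)) * W := mul_le_mul_of_nonneg_right ht2 hW0
      _ ≤ -G := by
          rw [div_mul_eq_mul_div, div_le_iff₀ hW1]
          nlinarith
    have hB : t ^ 2 * W ≤ t * (-G) := by
      calc t ^ 2 * W = t * (t * W) := by ring
      _ ≤ t * (-G) := mul_le_mul_of_nonneg_left h8 htpos.le
    have hC : t * G < 0 := mul_neg_of_pos_of_neg htpos hGneg
    have hD : t * (-G) = -(t * G) := by ring
    linarith
  -- instantiate the directions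
  have feas : ∀ i, 0 ≤ dot (fun k => A k i) r + s * (lam i + δ) := by
    intro i
    set v : Fin n → ℝ := fun j => if j = i then (1:ℝ) else 0 with hvdef
    have harg : ∀ t : ℝ, t ∈ Set.Icc (0:ℝ) 1 → ∀ j, 0 ≤ xs j + t * v j := by
      intro t ht j
      rw [hvdef]
      rcases eq_or_ne j i with h | h
      · simp only [h, eq_self_iff_true, if_true, mul_one]; linarith [hxs0 i, ht.1]
      · simp only [if_neg h, mul_zero, add_zero]; exact hxs0 j
    have h := dir v harg
    have e1 : A.mulVec v = fun k => A k i := by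
      funext k
      simp only [Matrix.mulVec, dotProduct, hvdef, mul_ite, mul_one, mul_zero]
      rw [Finset.sum_ite_eq']
      simp
    have e2 : ∑ j, (lam j + δ) * v j = lam i + δ := by
      simp only [hvdef, mul_ite, mul_one, mul_zero]
      rw [Finset.sum_ite_eq']
      simp
    rw [e1, e2] at h
    exact h
  have xdir : dot (A.mulVec xs) r + s * ∑ i, (lam i + δ) * xs i ≤ 0 := by
    have harg : ∀ t : ℝ, t ∈ Set.Icc (0:ℝ) 1 → ∀ j, 0 ≤ xs j + t * (-xs j) := by
      intro t ht j
      have := mul_nonneg (sub_nonneg.2 ht.2) (hxs0 j)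
      nlinarith
    have h := dir (fun j => -xs j) harg
    have e1 : A.mulVec (fun j => -xs j) = fun k => -(A.mulVec xs k) := by
      have : (fun j => -xs j) = -xs := rfl
      rw [this, Matrix.mulVec_neg]
      rfl
    have e2 : dot (fun k => -(A.mulVec xs k)) r = -(dot (A.mulVec xs) r) := by
      simp only [dot]; rw [← Finset.sum_neg_distrib]
      exact Finset.sum_congr rfl fun k _ => by ring
    have e3 : ∑ j, (lam j + δ) * (-xs j) = -(∑ j, (lam j + δ) * xs j) := by
      rw [← Finset.sum_neg_distrib]
      exact Finset.sum_congr rfl fun j _ => by ring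
    rw [e1, e2, e3] at h
    linarith
  -- the dual vector
  refine ⟨fun k => r k / s, ?_, ?_, ?_⟩
  · have e : ∑ k, (r k / s) ^ 2 = S2 / s ^ 2 := by
      rw [hS2, Finset.sum_div]
      exact Finset.sum_congr rfl fun k _ => by rw [div_pow]
    rw [norm2, e]
    have h1 : S2 / s ^ 2 ≤ 1 := by
      rw [div_le_one (by positivity)]
      nlinarith [hs_sq, hδ]
    calc Real.sqrt (S2 / s ^ 2) ≤ Real.sqrt 1 := Real.sqrt_le_sqrt h1
    _ = 1 := Real.sqrt_one
  · intro i
    have e : dot (fun k => A k i) (fun k => r k / s) = dot (fun k => A k i) r / s := by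
      simp only [dot]; rw [Finset.sum_div]
      exact Finset.sum_congr rfl fun k _ => by ring
    rw [e]
    have h2 : -(lam i + δ) ≤ dot (fun k => A k i) r / s := by
      rw [le_div_iff₀ hs_pos]
      nlinarith [feas i]
    linarith
  · have ebr : dot b (fun k => r k / s) = (dot (A.mulVec xs) r - S2) / s := by
      have e1 : dot b r = dot (A.mulVec xs) r - S2 := by
        simp only [dot, hS2]
        rw [← Finset.sum_sub_distrib]
        refine Finset.sum_congr rfl fun k _ => ?_
        have : r k = A.mulVec xs k - b k := by rw [hr]; rfl
        rw [this]; ring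
      have e2 : dot b (fun k => r k / s) = dot b r / s := by
        simp only [dot]; rw [Finset.sum_div]
        exact Finset.sum_congr rfl fun k _ => by ring
      rw [e2, e1]
    rw [ebr]
    have hq1 : s - δ ≤ S2 / s := by
      rw [le_div_iff₀ hs_pos]
      nlinarith [hδs, hδ, hs_sq]
    have hq2 : dot (A.mulVec xs) r / s ≤ -(∑ i, (lam i + δ) * xs i) := by
      rw [div_le_iff₀ hs_pos]
      nlinarith [xdir]
    have hq3 : ∑ i, lam i * xs i ≤ ∑ i, (lam i + δ) * xs i :=
      Finset.sum_le_sum fun i _ => by nlinarith [hxs0 i, hδ]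
    have hsr : norm2 r ≤ s := by
      rw [norm2, ← hS2, hs]
      exact Real.sqrt_le_sqrt (by nlinarith)
    have hpxs : p ≤ norm2 r + ∑ i, lam i * xs i := by
      have := hp xs hxs0
      rwa [← hr] at this
    have ediv : -((dot (A.mulVec xs) r - S2) / s) = S2 / s - dot (A.mulVec xs) r / s := by
      ring
    rw [ediv]
    linarith

lemma continuous_norm2 {m : ℕ} : Continuous (norm2 : (Fin m → ℝ) → ℝ) :=
  (continuous_finset_sum _ fun k _ => (continuous_apply k).pow 2).sqrt

lemma continuous_dot {m : ℕ} (w : Fin m → ℝ) : Continuous (fun v : Fin m → ℝ => dot w v) :=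
  continuous_finset_sum _ fun k _ => continuous_const.mul (continuous_apply k)

set_option maxHeartbeats 1000000 in
theorem nnrsqrtLASSO_strong_duality {m n : ℕ}
    (A : Matrix (Fin m) (Fin n) ℝ) (b : Fin m → ℝ)
    (lam : Fin n → ℝ) (hlam : ∀ i, 0 ≤ lam i) :
    sInf {v : ℝ | ∃ x : Fin n → ℝ, (∀ i, 0 ≤ x i) ∧
        v = norm2 (A.mulVec x - b) + ∑ i, lam i * x i}
      = sSup {v : ℝ | ∃ u : Fin m → ℝ, norm2 u ≤ 1 ∧
          (∀ i, 0 ≤ dot (fun k => A k i) u + lam i) ∧ v = -(dot b u)} := by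
  classical
  set P : Set ℝ := {v : ℝ | ∃ x : Fin n → ℝ, (∀ i, 0 ≤ x i) ∧
        v = norm2 (A.mulVec x - b) + ∑ i, lam i * x i} with hPdef
  set D : Set ℝ := {v : ℝ | ∃ u : Fin m → ℝ, norm2 u ≤ 1 ∧
          (∀ i, 0 ≤ dot (fun k => A k i) u + lam i) ∧ v = -(dot b u)} with hDdef
  have hPne : P.Nonempty := ⟨_, ⟨0, fun i => le_refl 0, rfl⟩⟩
  have hPlb : ∀ w ∈ P, (0:ℝ) ≤ w := by
    rintro w ⟨x, hx, rfl⟩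
    have h1 : 0 ≤ ∑ i, lam i * x i :=
      Finset.sum_nonneg fun i _ => mul_nonneg (hlam i) (hx i)
    have h2 := norm2_nonneg' (A.mulVec x - b)
    linarith
  have hPbdd : BddBelow P := ⟨0, fun w hw => hPlb w hw⟩
  have hDne : D.Nonempty := by
    refine ⟨0, 0, ?_, ?_, ?_⟩
    · simp [norm2]
    · intro i; simpa [dot] using hlam i
    · simp [dot]
  have hDbdd : BddAbove D := by
    refine ⟨norm2 b, ?_⟩
    rintro w ⟨u, hu1, _, rfl⟩
    have e1 : dot b (fun k => -u k) = -(dot b u) := by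
      simp only [dot]
      rw [← Finset.sum_neg_distrib]
      exact Finset.sum_congr rfl fun k _ => by ring
    have e2 : norm2 (fun k => -u k) = norm2 u := by
      simp only [norm2]
      congr 1
      exact Finset.sum_congr rfl fun k _ => by ring
    have h1 := cauchy' b (fun k => -u k)
    rw [e1, e2] at h1
    have h2 : norm2 b * norm2 u ≤ norm2 b * 1 :=
      mul_le_mul_of_nonneg_left hu1 (norm2_nonneg' b)
    simp only [mul_one] at h2
    linarith
  -- weak duality
  have weak : ∀ v ∈ D, ∀ w ∈ P, v ≤ w := by
    rintro v ⟨u, hu1, hufeas, rfl⟩ w ⟨x, hx, rfl⟩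
    have d1 : dot (A.mulVec x - b) u ≤ norm2 (A.mulVec x - b) := by
      have h := cauchy' (A.mulVec x - b) u
      have h2 : norm2 (A.mulVec x - b) * norm2 u ≤ norm2 (A.mulVec x - b) * 1 :=
        mul_le_mul_of_nonneg_left hu1 (norm2_nonneg' _)
      simp only [mul_one] at h2
      linarith
    have d2 : dot (A.mulVec x) u = ∑ i, x i * dot (fun k => A k i) u := by
      simp only [dot, Matrix.mulVec, dotProduct, Finset.sum_mul, Finset.mul_sum]
      rw [Finset.sum_comm]
      exact Finset.sum_congr rfl fun i _ => Finset.sum_congr rfl fun k _ => by ring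
    have d3 : dot (A.mulVec x - b) u = dot (A.mulVec x) u - dot b u := by
      simp only [dot, Pi.sub_apply, sub_mul, Finset.sum_sub_distrib]
    have d5 : -(dot (A.mulVec x) u) ≤ ∑ i, lam i * x i := by
      rw [d2, ← Finset.sum_neg_distrib]
      exact Finset.sum_le_sum fun i _ => by
        nlinarith [mul_nonneg (hx i) (hufeas i)]
    linarith
  -- strong duality via approximation
  have hple : ∀ x : Fin n → ℝ, (∀ i, 0 ≤ x i) →
      sInf P ≤ norm2 (A.mulVec x - b) + ∑ i, lam i * x i :=
    fun x hx => csInf_le hPbdd ⟨x, hx, rfl⟩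
  have key : ∀ j : ℕ, ∃ u : Fin m → ℝ, norm2 u ≤ 1 ∧
      (∀ i, -(1/((j:ℝ)+1)) ≤ dot (fun k => A k i) u + lam i) ∧
      sInf P - 1/((j:ℝ)+1) ≤ -(dot b u) := fun j =>
    approx_dual A b lam hlam (by positivity) (sInf P) hple
  choose g hg1 hg2 hg3 using key
  have hbox : ∀ j, g j ∈ Set.Icc (fun _ : Fin m => (-1:ℝ)) (fun _ => (1:ℝ)) := by
    intro j
    have hsq : ∀ k, (g j k) ^ 2 ≤ 1 := by
      intro k
      have h1 : (g j k) ^ 2 ≤ ∑ k', g j k' ^ 2 :=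
        Finset.single_le_sum (f := fun k' => g j k' ^ 2)
          (fun _ _ => sq_nonneg _) (Finset.mem_univ k)
      have h2 : ∑ k', g j k' ^ 2 = norm2 (g j) ^ 2 := (sq_norm2 _).symm
      nlinarith [hg1 j, norm2_nonneg' (g j)]
    refine Set.mem_Icc.2 ⟨fun k => ?_, fun k => ?_⟩
    · show (-1:ℝ) ≤ g j k
      nlinarith [hsq k, sq_nonneg (g j k + 1)]
    · show g j k ≤ (1:ℝ)
      nlinarith [hsq k, sq_nonneg (g j k - 1)]
  obtain ⟨u, hu, φ, hφ, hconv⟩ := isCompact_Icc.tendsto_subseq hbox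
  have htend0 : Filter.Tendsto (fun j : ℕ => 1/((φ j : ℝ)+1)) Filter.atTop (nhds 0) :=
    tendsto_one_div_add_atTop_nhds_zero_nat.comp hφ.tendsto_atTop
  have hn1 : norm2 u ≤ 1 :=
    le_of_tendsto ((continuous_norm2.tendsto u).comp hconv)
      (Filter.Eventually.of_forall fun j => hg1 (φ j))
  have hfeas : ∀ i, 0 ≤ dot (fun k => A k i) u + lam i := by
    intro i
    have hti : Filter.Tendsto (fun j => dot (fun k => A k i) (g (φ j)) + lam i)
        Filter.atTop (nhds (dot (fun k => A k i) u + lam i)) :=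
      (((continuous_dot _).tendsto u).comp hconv).add tendsto_const_nhds
    have := le_of_tendsto_of_tendsto' htend0.neg hti fun j => hg2 (φ j) i
    simpa using this
  have hval : sInf P ≤ -(dot b u) := by
    have htl : Filter.Tendsto (fun j => sInf P - 1/((φ j : ℝ)+1))
        Filter.atTop (nhds (sInf P - 0)) := tendsto_const_nhds.sub htend0
    have htr : Filter.Tendsto (fun j => -(dot b (g (φ j))))
        Filter.atTop (nhds (-(dot b u))) := (((continuous_dot b).tendsto u).comp hconv).neg
    have := le_of_tendsto_of_tendsto' htl htr fun j => hg3 (φ j)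
    simpa using this
  apply le_antisymm
  · exact hval.trans (le_csSup hDbdd ⟨u, hn1, hfeas, rfl⟩)
  · exact csSup_le hDne fun v hv => le_csInf hPne fun w hw => weak v hv w hw
end

section
/- For vectors a, b in R^m with a ≠ 0, b ≠ 0 and scalar λ ≥ 0, the point x = 0 minimizes f(x) = ||a x - b||_2 + λ|x| over R if and only if |a^T b| ≤ λ ||b||_2. -/
lemma norm2_pos' {m : ℕ} (v : Fin m → ℝ) (hv : v ≠ 0) : 0 < norm2 v := by
  apply Real.sqrt_pos.2
  obtain ⟨k, hk⟩ := Function.ne_iff.1 hv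
  exact Finset.sum_pos' (fun i _ => sq_nonneg _) ⟨k, Finset.mem_univ k, pow_two_pos_of_ne_zero hk⟩

lemma cs' {m : ℕ} (u v : Fin m → ℝ) : |dot u v| ≤ norm2 u * norm2 v := by
  unfold dot norm2
  rw [← Real.sqrt_mul (Finset.sum_nonneg fun k _ => sq_nonneg _), ← Real.sqrt_sq_eq_abs]
  exact Real.sqrt_le_sqrt (Finset.sum_mul_sq_le_sq_mul_sq _ _ _)

lemma expand' {m : ℕ} (a b : Fin m → ℝ) (x : ℝ) :
    ∑ k, ((x • a - b) k) ^ 2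
      = x ^ 2 * (∑ k, a k ^ 2) - 2 * x * dot a b + ∑ k, b k ^ 2 := by
  unfold dot
  simp only [Pi.sub_apply, Pi.smul_apply, smul_eq_mul]
  rw [Finset.mul_sum, Finset.mul_sum, ← Finset.sum_sub_distrib, ← Finset.sum_add_distrib]
  exact Finset.sum_congr rfl fun k _ => by ring

lemma dot_sub' {m : ℕ} (a b : Fin m → ℝ) (x : ℝ) :
    dot (x • a - b) b = x * dot a b - ∑ k, b k ^ 2 := by
  unfold dot
  simp only [Pi.sub_apply, Pi.smul_apply, smul_eq_mul]
  rw [Finset.mul_sum, ← Finset.sum_sub_distrib]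
  exact Finset.sum_congr rfl fun k _ => by ring

lemma norm2_zero_smul {m : ℕ} (a b : Fin m → ℝ) : norm2 ((0 : ℝ) • a - b) = norm2 b := by
  unfold norm2
  congr 1
  exact Finset.sum_congr rfl fun k _ => by simp [neg_sq]

lemma aux_contra (B E A2 lam eps t N : ℝ) (hB : 0 < B) (hlam : 0 ≤ lam)
    (hA2 : 0 ≤ A2) (heps : eps = E - lam * B) (hepspos : 0 < eps)
    (ht : 0 < t) (ht2' : t * (A2 + 1) ≤ eps) (hlamt : lam * t ≤ B)
    (hN0 : 0 ≤ N) (hx : B ≤ N + lam * t)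
    (hNsq : N ^ 2 = t ^ 2 * A2 - 2 * (t * E) + B ^ 2) : False := by
  have hkey : B - lam * t ≤ N := by linarith
  have hsq : (B - lam * t) ^ 2 ≤ N ^ 2 := by
    apply sq_le_sq' <;> nlinarith
  rw [hNsq] at hsq
  have e1 : 2 * (t * E) ≤ 2 * lam * t * B + t ^ 2 * A2 := by
    nlinarith [sq_nonneg (lam * t)]
  have e2 : 2 * t * eps ≤ t ^ 2 * A2 := by nlinarith [e1]
  have e3 : t * A2 ≤ eps - t := by nlinarith [ht2']
  have e4 : t * (t * A2) ≤ t * (eps - t) := mul_le_mul_of_nonneg_left e3 ht.le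
  nlinarith [mul_pos ht hepspos, sq_nonneg t, e2, e4]

theorem univariate_zero_opt_iff {m : ℕ} (a b : Fin m → ℝ)
    (ha : a ≠ 0) (hb : b ≠ 0) (lam : ℝ) (hlam : 0 ≤ lam) :
    (∀ x : ℝ, norm2 ((0 : ℝ) • a - b) + lam * |(0 : ℝ)|
        ≤ norm2 (x • a - b) + lam * |x|)
      ↔ |dot a b| ≤ lam * norm2 b := by
  set B := norm2 b with hBdef
  set D := dot a b with hDdef
  set A2 := ∑ k, a k ^ 2 with hA2def
  have hB : 0 < B := norm2_pos' b hb
  have hSb : B ^ 2 = ∑ k, b k ^ 2 := sq_norm2 b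
  have hA2 : 0 ≤ A2 := Finset.sum_nonneg fun k _ => sq_nonneg _
  constructor
  · intro h
    by_contra hc
    push_neg at hc
    set ε := |D| - lam * B with hεdef
    have hε : 0 < ε := by simp [hεdef]; linarith
    set s : ℝ := if 0 ≤ D then 1 else -1 with hsdef
    have hs2 : s ^ 2 = 1 := by by_cases h0 : 0 ≤ D <;> simp [hsdef, h0]
    have hsD : s * D = |D| := by
      by_cases h0 : 0 ≤ D
      · simp [hsdef, h0, abs_of_nonneg h0]
      · push_neg at h0
        simp [hsdef, not_le.2 h0, abs_of_neg h0]
    have hsabs : |s| = 1 := by by_cases h0 : 0 ≤ D <;> simp [hsdef, h0]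
    set t : ℝ := min (B / (lam + 1)) (ε / (A2 + 1)) with htdef
    have ht : 0 < t := lt_min (by positivity) (by positivity)
    have ht1 : t ≤ B / (lam + 1) := min_le_left _ _
    have ht2 : t ≤ ε / (A2 + 1) := min_le_right _ _
    have ht2' : t * (A2 + 1) ≤ ε := by
      rw [← le_div_iff₀ (by positivity)]; exact ht2
    have hlamt : lam * t ≤ B := by
      have : t * (lam + 1) ≤ B := by
        rw [← le_div_iff₀ (by positivity)]; exact ht1
      nlinarith
    have hx := h (s * t)
    rw [norm2_zero_smul] at hx
    have habs : |s * t| = t := by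
      rw [abs_mul, hsabs, one_mul, abs_of_pos ht]
    rw [habs] at hx
    simp only [abs_zero, mul_zero, add_zero] at hx
    set N := norm2 ((s * t) • a - b) with hNdef
    have hN0 : 0 ≤ N := norm2_nonneg' _
    have hNsq : N ^ 2 = (s * t) ^ 2 * A2 - 2 * (s * t) * D + B ^ 2 := by
      rw [hNdef, sq_norm2, expand' a b (s * t), hSb]
    have hst2 : (s * t) ^ 2 = t ^ 2 := by rw [mul_pow, hs2, one_mul]
    have hstD : (s * t) * D = t * |D| := by
      rw [mul_comm s t, mul_assoc, hsD]
    rw [hst2, mul_assoc 2, hstD] at hNsq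
    exact aux_contra B |D| A2 lam ε t N hB hlam hA2 hεdef hε ht ht2' hlamt hN0 hx hNsq
  · intro hD x
    rw [norm2_zero_smul]
    simp only [abs_zero, mul_zero, add_zero]
    set N := norm2 (x • a - b) with hNdef
    have hN0 : 0 ≤ N := norm2_nonneg' _
    have hcs := cs' (x • a - b) b
    rw [dot_sub', ← hSb, ← hNdef, ← hDdef, ← hBdef] at hcs
    have h1 : B ^ 2 - x * D ≤ N * B := by
      have := neg_abs_le (x * D - B ^ 2)
      linarith
    have h2 : x * D ≤ |x| * |D| := by
      calc x * D ≤ |x * D| := le_abs_self _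
        _ = |x| * |D| := abs_mul _ _
    have h3 : |x| * |D| ≤ |x| * (lam * B) :=
      mul_le_mul_of_nonneg_left hD (abs_nonneg x)
    -- B^2 - |x| * lam * B ≤ N * B, divide by B
    nlinarith [abs_nonneg x]
end

section
/- For vectors a, b in R^m with a ≠ 0, b ≠ 0 and scalar λ ≥ 0, the point x = 0 minimizes f(x) = ||a x - b||_2 + λ·x over the set {x ∈ R : x ≥ 0} if and only if a^T b ≤ λ ||b||_2. -/
/-!
The function `g x = ‖x • a - b‖` is the norm composed with an affine map, so it lies above its
tangent line at `0`, namely `‖b‖ - x ⟪a, b⟫ / ‖b‖` (Cauchy–Schwarz against `b`). Hence `0` minimises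
`g x + λ x` on `[0, ∞)` exactly when the right derivative `λ - ⟪a, b⟫ / ‖b‖` at `0` is nonnegative:
necessity is Fermat's rule at an endpoint, sufficiency is the tangent-line bound.
-/

open Set RealInnerProductSpace

theorem IsMinOn.nonneg_of_hasDerivWithinAt_Ici {g : ℝ → ℝ} {g' a : ℝ}
    (hmin : IsMinOn g (Ici a) a) (hg : HasDerivWithinAt g g' (Ici a) a) : 0 ≤ g' := by
  have hcone : (1 : ℝ) ∈ posTangentConeAt (Ici a) a :=
    mem_posTangentConeAt_of_segment_subset
      ((segment_subset_Icc (by linarith)).trans Icc_subset_Ici_self)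
  simpa using hmin.localize.hasFDerivWithinAt_nonneg hg.hasFDerivWithinAt hcone

section InnerProductSpace

variable {E : Type*} [NormedAddCommGroup E] [InnerProductSpace ℝ E]

theorem hasDerivAt_norm_smul_sub_zero (a : E) {b : E} (hb : b ≠ 0) :
    HasDerivAt (fun x : ℝ => ‖x • a - b‖) (-(⟪a, b⟫ / ‖b‖)) 0 := by
  have hsq : HasDerivAt (fun x : ℝ => ‖x • a - b‖ ^ 2) (2 * ⟪0 • a - b, a⟫) 0 := by
    simpa using (((hasDerivAt_id (0 : ℝ)).smul_const a).sub_const b).norm_sq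
  have hsqrt := hsq.sqrt (by simpa using hb)
  simp only [Real.sqrt_sq (norm_nonneg _)] at hsqrt
  convert hsqrt using 1
  simp only [zero_smul, zero_sub, norm_neg, inner_neg_left, real_inner_comm, mul_neg]
  field_simp

theorem sq_norm_sub_mul_inner_le_norm_mul_norm_smul_sub (a b : E) (x : ℝ) :
    ‖b‖ ^ 2 - x * ⟪a, b⟫ ≤ ‖b‖ * ‖x • a - b‖ := by
  have hcs := real_inner_le_norm b (b - x • a)
  rw [norm_sub_rev] at hcs
  simpa [inner_sub_right, inner_smul_right, real_inner_self_eq_norm_sq, real_inner_comm] using hcs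

theorem isMinOn_norm_smul_sub_add_mul_Ici_iff (a : E) {b : E} (hb : b ≠ 0) (lam : ℝ) :
    IsMinOn (fun x : ℝ => ‖x • a - b‖ + lam * x) (Ici 0) 0 ↔ ⟪a, b⟫ ≤ lam * ‖b‖ := by
  have hb' : 0 < ‖b‖ := norm_pos_iff.2 hb
  constructor
  · intro hmin
    have hderiv : HasDerivWithinAt (fun x : ℝ => ‖x • a - b‖ + lam * x)
        (-(⟪a, b⟫ / ‖b‖) + lam) (Ici 0) 0 :=
      ((hasDerivAt_norm_smul_sub_zero a hb).add (hasDerivAt_const_mul lam)).hasDerivWithinAt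
    have hslope := hmin.nonneg_of_hasDerivWithinAt_Ici hderiv
    rwa [neg_add_eq_sub, sub_nonneg, div_le_iff₀ hb'] at hslope
  · intro hab x hx
    have htangent := sq_norm_sub_mul_inner_le_norm_mul_norm_smul_sub a b x
    have hinner : x * ⟪a, b⟫ ≤ x * (lam * ‖b‖) := mul_le_mul_of_nonneg_left hab hx
    simp only [zero_smul, zero_sub, norm_neg, mul_zero, add_zero, mem_ofPred_eq]
    nlinarith

end InnerProductSpace

theorem norm2_eq_norm {m : ℕ} (v : Fin m → ℝ) :
    norm2 v = ‖(WithLp.toLp 2 v : EuclideanSpace ℝ (Fin m))‖ := by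
  simp [norm2, EuclideanSpace.norm_eq]

theorem dot_eq_inner {m : ℕ} (u v : Fin m → ℝ) :
    dot u v = ⟪(WithLp.toLp 2 u : EuclideanSpace ℝ (Fin m)), WithLp.toLp 2 v⟫ := by
  simp [dot, PiLp.inner_apply, mul_comm]

theorem univariate_nonneg_zero_opt_iff_general {m : ℕ} (a b : Fin m → ℝ)
    (hb : b ≠ 0) (lam : ℝ) :
    (∀ x : ℝ, 0 ≤ x → norm2 ((0 : ℝ) • a - b) + lam * (0 : ℝ)
        ≤ norm2 (x • a - b) + lam * x)
      ↔ dot a b ≤ lam * norm2 b := by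
  have hb' : (WithLp.toLp 2 b : EuclideanSpace ℝ (Fin m)) ≠ 0 := by simpa using hb
  simp only [norm2_eq_norm, dot_eq_inner, WithLp.toLp_sub, WithLp.toLp_smul]
  exact isMinOn_norm_smul_sub_add_mul_Ici_iff _ hb' lam

theorem univariate_nonneg_zero_opt_iff {m : ℕ} (a b : Fin m → ℝ)
    (ha : a ≠ 0) (hb : b ≠ 0) (lam : ℝ) (hlam : 0 ≤ lam) :
    (∀ x : ℝ, 0 ≤ x → norm2 ((0 : ℝ) • a - b) + lam * (0 : ℝ)
        ≤ norm2 (x • a - b) + lam * x)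
      ↔ dot a b ≤ lam * norm2 b :=
  univariate_nonneg_zero_opt_iff_general a b hb lam
end

section
/- Let a, b ∈ R^m with |a^T b| > λ ||b||_2 for some λ ≥ 0 (which implies ||a||_2 > λ and a ≠ 0, b ≠ 0). Then the unique minimizer of f(x) = ||a x - b||_2 + λ|x| over R is x* = x_ls - sgn(x_ls) · (λ/||a||_2²) · sqrt( (||a||_2² ||b||_2² - (a^T b)²) / (||a||_2² - λ²) ), where x_ls = (a^T b)/||a||_2². -/
/-! With A = ‖a‖², B = ‖b‖², C = aᵀb and D = AB - C² ≥ 0, completing the square gives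
A · ‖x a - b‖ = √A · ‖(A x - C, √D)‖, a Euclidean norm in ℝ². Cauchy–Schwarz against
(-sλ, √(A - λ²)), a vector of norm √A when s = sgn C, together with λ|x| ≥ sλx, bounds
A · (‖x a - b‖ + λ|x|) below by λ|C| + √(A - λ²)·√D for every x. Equality in Cauchy–Schwarz
determines A x - C, hence x; at x* both inequalities are equalities, the second one because
λ²B < C² forces x* to have the sign s. -/

open Real

theorem mul_add_mul_le_sqrt_mul_sqrt (p w u v : ℝ) :
    p * u + w * v ≤ √(p ^ 2 + w ^ 2) * √(u ^ 2 + v ^ 2) := by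
  rw [← sqrt_mul (by positivity)]
  exact (le_abs_self _).trans (abs_le_sqrt (by nlinarith [sq_nonneg (p * v - w * u)]))

theorem mul_eq_mul_of_sqrt_mul_sqrt_le {p w u v : ℝ}
    (h : √(p ^ 2 + w ^ 2) * √(u ^ 2 + v ^ 2) ≤ p * u + w * v) : p * v = w * u := by
  rw [← sqrt_mul (by positivity), sqrt_le_left ((sqrt_nonneg _).trans h)] at h
  nlinarith [sq_nonneg (p * v - w * u)]

theorem Real.sign_mul_self (r : ℝ) : sign r * r = |r| := by
  rcases lt_trichotomy r 0 with hr | rfl | hr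
  · rw [sign_of_neg hr, abs_of_neg hr, neg_one_mul]
  · simp
  · rw [sign_of_pos hr, abs_of_pos hr, one_mul]

theorem Real.abs_sign_of_ne_zero {r : ℝ} (hr : r ≠ 0) : |sign r| = 1 := by
  rcases sign_apply_eq_of_ne_zero r hr with h | h <;> simp [h]

theorem Real.sign_div_of_pos {r c : ℝ} (hc : 0 < c) : sign (r / c) = sign r := by
  rcases lt_trichotomy r 0 with hr | rfl | hr
  · rw [sign_of_neg hr, sign_of_neg (div_neg_of_neg_of_pos hr hc)]
  · simp
  · rw [sign_of_pos hr, sign_of_pos (div_pos hr hc)]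

section norm2

variable {m : ℕ}

theorem norm2_sq (v : Fin m → ℝ) : norm2 v ^ 2 = ∑ k, v k ^ 2 :=
  sq_sqrt (by positivity)

theorem dot_sq_le (a b : Fin m → ℝ) : dot a b ^ 2 ≤ norm2 a ^ 2 * norm2 b ^ 2 := by
  rw [norm2_sq, norm2_sq]
  exact Finset.sum_mul_sq_le_sq_mul_sq _ _ _

theorem norm2_smul_sub (x : ℝ) (a b : Fin m → ℝ) :
    norm2 (x • a - b) = √(norm2 a ^ 2 * x ^ 2 - 2 * dot a b * x + norm2 b ^ 2) := by
  rw [norm2_sq, norm2_sq, norm2, dot, Finset.sum_mul, Finset.mul_sum, Finset.sum_mul,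
    ← Finset.sum_sub_distrib, ← Finset.sum_add_distrib]
  congr 1
  refine Finset.sum_congr rfl fun k _ => ?_
  simp only [Pi.sub_apply, Pi.smul_apply, smul_eq_mul]
  ring

end norm2

namespace SqrtLasso

noncomputable section

def objective (A B C lam x : ℝ) : ℝ := √(A * x ^ 2 - 2 * C * x + B) + lam * |x|

def minimizer (A B C lam s : ℝ) : ℝ :=
  C / A - s * (lam / A) * √((A * B - C ^ 2) / (A - lam ^ 2))

def lowerBound (A B C lam s : ℝ) : ℝ := s * lam * C + √(A - lam ^ 2) * √(A * B - C ^ 2)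

end

variable {A B C lam s : ℝ}

theorem lam_sq_lt (hB : 0 ≤ B) (hCS : C ^ 2 ≤ A * B) (hC : lam ^ 2 * B < C ^ 2) : lam ^ 2 < A := by
  nlinarith [sq_nonneg lam, sq_nonneg C]

theorem mul_sqrt_quadratic_eq (hlamA : lam ^ 2 ≤ A) (hCS : C ^ 2 ≤ A * B) (hs : |s| = 1)
    (x : ℝ) : A * √(A * x ^ 2 - 2 * C * x + B) =
      √((-(s * lam)) ^ 2 + √(A - lam ^ 2) ^ 2) * √((A * x - C) ^ 2 + √(A * B - C ^ 2) ^ 2) := by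
  have hA : 0 ≤ A := (sq_nonneg lam).trans hlamA
  have hs2 : s ^ 2 = 1 := by rw [← sq_abs, hs, one_pow]
  rw [sq_sqrt (by linarith), sq_sqrt (by linarith),
    show (-(s * lam)) ^ 2 + (A - lam ^ 2) = A by linear_combination lam ^ 2 * hs2,
    show (A * x - C) ^ 2 + (A * B - C ^ 2) = A * (A * x ^ 2 - 2 * C * x + B) by ring,
    sqrt_mul hA, ← mul_assoc, mul_self_sqrt hA]

theorem lowerBound_le_mul_objective (hlam : 0 ≤ lam) (hlamA : lam ^ 2 ≤ A)
    (hCS : C ^ 2 ≤ A * B) (hs : |s| = 1) (x : ℝ) :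
    lowerBound A B C lam s ≤ A * objective A B C lam x := by
  have hA : 0 ≤ A := (sq_nonneg lam).trans hlamA
  have hcs := mul_add_mul_le_sqrt_mul_sqrt (-(s * lam)) √(A - lam ^ 2) (A * x - C)
    √(A * B - C ^ 2)
  rw [← mul_sqrt_quadratic_eq hlamA hCS hs] at hcs
  have hsx : s * x ≤ |x| := (le_abs_self _).trans (by rw [abs_mul, hs, one_mul])
  have hreg := mul_le_mul_of_nonneg_left hsx (mul_nonneg hA hlam)
  unfold lowerBound objective
  linarith

theorem minimizer_eq (hlamA : lam ^ 2 < A) :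
    minimizer A B C lam s = (C - s * lam * √(A * B - C ^ 2) / √(A - lam ^ 2)) / A := by
  have hA : 0 < A := (sq_nonneg lam).trans_lt hlamA
  have hw : 0 < √(A - lam ^ 2) := sqrt_pos.2 (by linarith)
  unfold minimizer
  rw [sqrt_div' _ (by linarith)]
  field_simp

theorem eq_minimizer_of_mul_objective_le (hlam : 0 ≤ lam) (hlamA : lam ^ 2 < A)
    (hCS : C ^ 2 ≤ A * B) (hs : |s| = 1) {x : ℝ}
    (h : A * objective A B C lam x ≤ lowerBound A B C lam s) : x = minimizer A B C lam s := by
  have hA : 0 < A := (sq_nonneg lam).trans_lt hlamA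
  have hw : 0 < √(A - lam ^ 2) := sqrt_pos.2 (by linarith)
  have hsx : s * x ≤ |x| := (le_abs_self _).trans (by rw [abs_mul, hs, one_mul])
  have hreg := mul_le_mul_of_nonneg_left hsx (mul_nonneg hA.le hlam)
  have hcs : √((-(s * lam)) ^ 2 + √(A - lam ^ 2) ^ 2) * √((A * x - C) ^ 2 + √(A * B - C ^ 2) ^ 2)
      ≤ -(s * lam) * (A * x - C) + √(A - lam ^ 2) * √(A * B - C ^ 2) := by
    rw [← mul_sqrt_quadratic_eq hlamA.le hCS hs]
    unfold lowerBound objective at h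
    linarith
  have hx := mul_eq_mul_of_sqrt_mul_sqrt_le hcs
  rw [minimizer_eq hlamA]
  field_simp
  linear_combination -hx

theorem sqrt_quadratic_minimizer (hlamA : lam ^ 2 < A) (hCS : C ^ 2 ≤ A * B) (hs : |s| = 1) :
    √(A * minimizer A B C lam s ^ 2 - 2 * C * minimizer A B C lam s + B) =
      √(A * B - C ^ 2) / √(A - lam ^ 2) := by
  have hA : 0 < A := (sq_nonneg lam).trans_lt hlamA
  have hs2 : s ^ 2 = 1 := by rw [← sq_abs, hs, one_pow]
  set w := √(A - lam ^ 2) with hw_def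
  set K := √(A * B - C ^ 2) with hK_def
  have hw : 0 < w := sqrt_pos.2 (by linarith)
  have hw2 : w ^ 2 = A - lam ^ 2 := sq_sqrt (by linarith)
  have hK2 : K ^ 2 = A * B - C ^ 2 := sq_sqrt (by linarith)
  have hq : A * minimizer A B C lam s ^ 2 - 2 * C * minimizer A B C lam s + B = (K / w) ^ 2 := by
    rw [minimizer_eq hlamA, ← hw_def, ← hK_def]
    field_simp
    linear_combination (A * B - C ^ 2) * hw2 + lam ^ 2 * K ^ 2 * hs2 + (lam ^ 2 - A) * hK2
  rw [hq, sqrt_sq (div_nonneg (sqrt_nonneg _) hw.le)]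

theorem abs_minimizer (hB : 0 ≤ B) (hCS : C ^ 2 ≤ A * B) (hC : lam ^ 2 * B < C ^ 2)
    (hs : |s| = 1) (hsC : s * C = |C|) :
    |minimizer A B C lam s| = s * minimizer A B C lam s := by
  have hlamA := lam_sq_lt hB hCS hC
  have hA : 0 < A := (sq_nonneg lam).trans_lt hlamA
  have hs2 : s ^ 2 = 1 := by rw [← sq_abs, hs, one_pow]
  set w := √(A - lam ^ 2) with hw_def
  set K := √(A * B - C ^ 2) with hK_def
  have hw : 0 < w := sqrt_pos.2 (by linarith)
  have hlt : lam * K / w < |C| := by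
    have : (lam * K / w) ^ 2 < |C| ^ 2 := by
      rw [div_pow, mul_pow, sq_sqrt (by linarith), sq_sqrt (by linarith), sq_abs,
        div_lt_iff₀ (by positivity)]
      nlinarith
    exact lt_of_pow_lt_pow_left₀ 2 (abs_nonneg C) this
  have hsx : s * minimizer A B C lam s = (|C| - lam * K / w) / A := by
    rw [minimizer_eq hlamA, ← hw_def, ← hK_def, ← hsC]
    field_simp
    linear_combination -(lam * K) * hs2
  rw [← one_mul |minimizer A B C lam s|, ← hs, ← abs_mul, hsx,
    abs_of_pos (div_pos (sub_pos.2 hlt) hA)]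

theorem mul_objective_minimizer (hB : 0 ≤ B) (hCS : C ^ 2 ≤ A * B)
    (hC : lam ^ 2 * B < C ^ 2) (hs : |s| = 1) (hsC : s * C = |C|) :
    A * objective A B C lam (minimizer A B C lam s) = lowerBound A B C lam s := by
  have hlamA := lam_sq_lt hB hCS hC
  have hA : 0 < A := (sq_nonneg lam).trans_lt hlamA
  have hs2 : s ^ 2 = 1 := by rw [← sq_abs, hs, one_pow]
  have hw : 0 < √(A - lam ^ 2) := sqrt_pos.2 (by linarith)
  have hw2 : √(A - lam ^ 2) ^ 2 = A - lam ^ 2 := sq_sqrt (by linarith)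
  unfold objective lowerBound
  rw [sqrt_quadratic_minimizer hlamA hCS hs, abs_minimizer hB hCS hC hs hsC,
    minimizer_eq hlamA]
  field_simp
  linear_combination (-(√(A * B - C ^ 2) * lam ^ 2)) * hs2 - √(A * B - C ^ 2) * hw2

theorem objective_minimizer_le (hlam : 0 ≤ lam) (hB : 0 ≤ B) (hCS : C ^ 2 ≤ A * B)
    (hC : lam ^ 2 * B < C ^ 2) (hs : |s| = 1) (hsC : s * C = |C|) (x : ℝ) :
    objective A B C lam (minimizer A B C lam s) ≤ objective A B C lam x := by
  have hlamA := lam_sq_lt hB hCS hC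
  refine le_of_mul_le_mul_left ?_ ((sq_nonneg lam).trans_lt hlamA)
  rw [mul_objective_minimizer hB hCS hC hs hsC]
  exact lowerBound_le_mul_objective hlam hlamA.le hCS hs x

theorem eq_minimizer_of_objective_le (hlam : 0 ≤ lam) (hB : 0 ≤ B) (hCS : C ^ 2 ≤ A * B)
    (hC : lam ^ 2 * B < C ^ 2) (hs : |s| = 1) (hsC : s * C = |C|) {x : ℝ}
    (h : objective A B C lam x ≤ objective A B C lam (minimizer A B C lam s)) :
    x = minimizer A B C lam s := by
  have hlamA := lam_sq_lt hB hCS hC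
  refine eq_minimizer_of_mul_objective_le hlam hlamA hCS hs ?_
  rw [← mul_objective_minimizer hB hCS hC hs hsC]
  exact mul_le_mul_of_nonneg_left h ((sq_nonneg lam).trans hlamA.le)

end SqrtLasso

open SqrtLasso in
theorem univariate_sqrtLASSO_nonzero_solution {m : ℕ} (a b : Fin m → ℝ)
    (lam : ℝ) (hlam : 0 ≤ lam) (h : |dot a b| > lam * norm2 b)
    (xls xstar : ℝ)
    (hxls : xls = dot a b / norm2 a ^ 2)
    (hxstar : xstar = xls - Real.sign xls * (lam / norm2 a ^ 2) *
        Real.sqrt ((norm2 a ^ 2 * norm2 b ^ 2 - (dot a b) ^ 2) /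
          (norm2 a ^ 2 - lam ^ 2))) :
    (∀ x : ℝ, norm2 (xstar • a - b) + lam * |xstar|
        ≤ norm2 (x • a - b) + lam * |x|) ∧
    (∀ x : ℝ, (∀ z : ℝ, norm2 (x • a - b) + lam * |x|
        ≤ norm2 (z • a - b) + lam * |z|) → x = xstar) := by
  subst hxstar hxls
  have hB : 0 ≤ norm2 b ^ 2 := sq_nonneg _
  have hCS := dot_sq_le a b
  have hC : lam ^ 2 * norm2 b ^ 2 < dot a b ^ 2 := by
    rw [← mul_pow, ← sq_abs (dot a b)]
    exact pow_lt_pow_left₀ h (mul_nonneg hlam (sqrt_nonneg _)) two_ne_zero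
  have hA : 0 < norm2 a ^ 2 := (sq_nonneg lam).trans_lt (lam_sq_lt hB hCS hC)
  have hCne : dot a b ≠ 0 := abs_pos.1 ((mul_nonneg hlam (sqrt_nonneg _)).trans_lt h)
  have hs : |sign (dot a b / norm2 a ^ 2)| = 1 := by
    rw [sign_div_of_pos hA, abs_sign_of_ne_zero hCne]
  have hsC : sign (dot a b / norm2 a ^ 2) * dot a b = |dot a b| := by
    rw [sign_div_of_pos hA, sign_mul_self]
  simp only [norm2_smul_sub]
  exact ⟨objective_minimizer_le hlam hB hCS hC hs hsC,
    fun x hx => eq_minimizer_of_objective_le hlam hB hCS hC hs hsC (hx _)⟩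
end

section
/- For the nonnegative univariate problem with a, b ∈ R^m, b ≠ 0, λ ≥ 0, if a^T b > λ||b||_2 then the minimizer of f(x) = ||a x - b||_2 + λx over x ≥ 0 is x* = (a^T b)/||a||_2² - (λ/||a||_2²)·sqrt((||a||_2²||b||_2² - (a^T b)²)/(||a||_2² - λ²)), and this x* is strictly positive. -/
theorem univariate_nn_sqrtLASSO_nonzero_solution {m : ℕ} (a b : Fin m → ℝ)
    (hb : b ≠ 0) (lam : ℝ) (hlam : 0 ≤ lam)
    (h : dot a b > lam * norm2 b) (xstar : ℝ)
    (hxstar : xstar = dot a b / norm2 a ^ 2 - (lam / norm2 a ^ 2) *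
        Real.sqrt ((norm2 a ^ 2 * norm2 b ^ 2 - (dot a b) ^ 2) /
          (norm2 a ^ 2 - lam ^ 2))) :
    0 < xstar ∧
    ∀ x : ℝ, 0 ≤ x → norm2 (xstar • a - b) + lam * xstar
        ≤ norm2 (x • a - b) + lam * x := by
  have hA0 : (0:ℝ) ≤ ∑ k, a k ^ 2 := Finset.sum_nonneg fun k _ => sq_nonneg _
  have hB0 : (0:ℝ) ≤ ∑ k, b k ^ 2 := Finset.sum_nonneg fun k _ => sq_nonneg _
  set A := ∑ k, a k ^ 2 with hAdef
  set B := ∑ k, b k ^ 2 with hBdef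
  set C := dot a b with hCdef
  have hnA : norm2 a ^ 2 = A := Real.sq_sqrt hA0
  have hnB : norm2 b ^ 2 = B := Real.sq_sqrt hB0
  have hnB' : norm2 b = Real.sqrt B := rfl
  have hBpos : 0 < B := by
    obtain ⟨k, hk⟩ := Function.ne_iff.mp hb
    exact Finset.sum_pos' (fun k _ => sq_nonneg _)
      ⟨k, Finset.mem_univ k,
        lt_of_le_of_ne (sq_nonneg _) (Ne.symm (pow_ne_zero 2 hk))⟩
  have hsB : 0 < Real.sqrt B := Real.sqrt_pos.mpr hBpos
  have hC : lam * Real.sqrt B < C := by rwa [hnB'] at h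
  have hCpos : 0 < C := lt_of_le_of_lt (by positivity) hC
  have hCS : C ^ 2 ≤ A * B := by
    simpa [hCdef, dot, hAdef, hBdef] using
      Finset.sum_mul_sq_le_sq_mul_sq (Finset.univ) a b
  have hsB2 : Real.sqrt B ^ 2 = B := Real.sq_sqrt hB0
  have hq : ∀ x : ℝ, norm2 (x • a - b) = Real.sqrt (A * x ^ 2 - 2 * C * x + B) := by
    intro x
    have hsum : ∑ k, (x • a - b) k ^ 2 = A * x ^ 2 - 2 * C * x + B := by
      have h1 : ∀ k, (x • a - b) k ^ 2
          = x ^ 2 * a k ^ 2 - (2 * x) * (a k * b k) + b k ^ 2 := by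
        intro k
        simp only [Pi.sub_apply, Pi.smul_apply, smul_eq_mul]
        ring
      rw [Finset.sum_congr rfl fun k _ => h1 k]
      rw [Finset.sum_add_distrib, Finset.sum_sub_distrib, ← Finset.mul_sum,
        ← Finset.mul_sum]
      simp only [hAdef, hBdef, hCdef, dot]
      ring
    rw [norm2, hsum]
  rw [hnA, hnB] at hxstar
  clear_value A B C
  clear hAdef hBdef hCdef hb h hnB' hB0 hA0
  have hApos : 0 < A := by nlinarith [pow_pos hCpos 2]
  have hC2 : lam ^ 2 * B < C ^ 2 := by
    have h2 := pow_lt_pow_left₀ hC (by positivity : (0:ℝ) ≤ lam * Real.sqrt B) two_ne_zero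
    rw [mul_pow, hsB2] at h2
    exact h2
  have hAl : lam ^ 2 < A := by nlinarith
  have hD0 : 0 ≤ (A * B - C ^ 2) / (A - lam ^ 2) :=
    div_nonneg (by linarith) (by linarith)
  set r := Real.sqrt ((A * B - C ^ 2) / (A - lam ^ 2)) with hrdef
  have hr0 : 0 ≤ r := Real.sqrt_nonneg _
  have hr2 : r ^ 2 * (A - lam ^ 2) = A * B - C ^ 2 := by
    rw [hrdef, Real.sq_sqrt hD0]
    exact div_mul_cancel₀ _ (ne_of_gt (by linarith : (0:ℝ) < A - lam ^ 2))
  have hxA : A * xstar = C - lam * r := by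
    have hAne : A ≠ 0 := ne_of_gt hApos
    rw [hxstar]
    field_simp
  clear_value r
  clear hxstar hrdef hD0
  have hlr : lam * r < C := by
    by_contra h'
    push_neg at h'
    have h1 : C ^ 2 ≤ (lam * r) ^ 2 := by nlinarith
    have key : (lam * r) ^ 2 * (A - lam ^ 2) = lam ^ 2 * (A * B - C ^ 2) := by
      linear_combination lam ^ 2 * hr2
    nlinarith
  have hxpos : 0 < xstar := by
    have hAx : 0 < A * xstar := by rw [hxA]; linarith
    by_contra h'
    push_neg at h'
    nlinarith
  refine ⟨hxpos, ?_⟩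
  have hqxs : A * xstar ^ 2 - 2 * C * xstar + B = r ^ 2 := by
    have key : A * (A * xstar ^ 2 - 2 * C * xstar + B) = A * r ^ 2 := by
      linear_combination (A * xstar - lam * r - C) * hxA - hr2
    exact mul_left_cancel₀ (ne_of_gt hApos) key
  have hnxs : norm2 (xstar • a - b) = r := by
    rw [hq, hqxs, Real.sqrt_sq hr0]
  intro x _
  rw [hnxs, hq]
  have expand : A * x ^ 2 - 2 * C * x + B - (r - lam * (x - xstar)) ^ 2
      = (A - lam ^ 2) * (x - xstar) ^ 2 := by
    linear_combination hqxs + 2 * (x - xstar) * hxA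
  have hnn : 0 ≤ (A - lam ^ 2) * (x - xstar) ^ 2 :=
    mul_nonneg (by linarith) (sq_nonneg _)
  have htangent : r - lam * (x - xstar) ≤ Real.sqrt (A * x ^ 2 - 2 * C * x + B) := by
    rcases le_or_gt (r - lam * (x - xstar)) 0 with h' | h'
    · exact h'.trans (Real.sqrt_nonneg _)
    · rw [show (r - lam * (x - xstar)) = Real.sqrt ((r - lam * (x - xstar)) ^ 2) by
        rw [Real.sqrt_sq h'.le]]
      apply Real.sqrt_le_sqrt
      linarith
  linarith [htangent]
end

section
/- Safe feature elimination: consider min over x ∈ R^n of f(x) = ||A x - b||_2 + Σ_i λ_i |x_i| with the regularized matrix A = [Φ; σI] and b = [y; 0], where σ > 0 and y ≠ 0. If for some index i it holds that ||φ_i||_2² + σ² < λ_i², where φ_i is the i-th column of Φ, then every optimal solution x* satisfies x*_i = 0. -/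
/-!
If `x*_i ≠ 0`, set that coordinate to zero. Since `A x - b` is affine in `x`, the residual
`‖A x - b‖₂` grows by at most `|x*_i| ‖a_i‖₂`, where `a_i = [φ_i; σ e_i]` is the `i`-th column
of `A` and `‖a_i‖₂² = ‖φ_i‖₂² + σ² < λ_i²`; the penalty drops by exactly `λ_i |x*_i|`, which is
larger. So `x*` was not optimal.
-/

/-- Objective of the regularized square-root LASSO with `A = [Φ; σI]`, `b = [y; 0]`:
`‖Ax - b‖₂ + Σ_i λ_i |x_i|`. -/
noncomputable def rsqrtObj {m n : ℕ} (Φ : Matrix (Fin m) (Fin n) ℝ)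
    (y : Fin m → ℝ) (σ : ℝ) (lam : Fin n → ℝ) (x : Fin n → ℝ) : ℝ :=
  Real.sqrt ((∑ k, (Φ.mulVec x - y) k ^ 2) + ∑ j, (σ * x j) ^ 2)
    + ∑ i, lam i * |x i|

open Function
open scoped Matrix

theorem update_zero_add_single {ι : Type*} [DecidableEq ι] (x : ι → ℝ) (i : ι) :
    update x i 0 + Pi.single i (x i) = x := by
  ext j
  by_cases h : j = i <;> simp [h]

theorem sum_mul_abs_update_zero {ι : Type*} [Fintype ι] [DecidableEq ι] (lam x : ι → ℝ) (i : ι) :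
    ∑ j, lam j * |update x i 0 j| = ∑ j, lam j * |x j| - lam i * |x i| := by
  rw [← Finset.add_sum_erase _ _ (Finset.mem_univ i),
    ← Finset.add_sum_erase _ _ (Finset.mem_univ i)]
  have h : ∀ j ∈ Finset.univ.erase i, lam j * |update x i 0 j| = lam j * |x j| := fun j hj => by
    rw [update_of_ne (Finset.ne_of_mem_erase hj)]
  simp [Finset.sum_congr rfl h]

theorem add_sum_mul_abs_update_zero_lt {ι : Type*} [Fintype ι] [DecidableEq ι]
    (g : (ι → ℝ) → ℝ) (lam x : ι → ℝ) {i : ι} {c : ℝ}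
    (hg : g (update x i 0) ≤ g x + c * |x i|) (hc : c < lam i) (hx : x i ≠ 0) :
    g (update x i 0) + ∑ j, lam j * |update x i 0 j| < g x + ∑ j, lam j * |x j| := by
  have : c * |x i| < lam i * |x i| := mul_lt_mul_of_pos_right hc (abs_pos.mpr hx)
  rw [sum_mul_abs_update_zero]
  linarith

theorem norm_toLp_sumElim {ι κ : Type*} [Fintype ι] [Fintype κ] (u : ι → ℝ) (v : κ → ℝ) :
    ‖WithLp.toLp 2 (Sum.elim u v)‖ = √(∑ k, u k ^ 2 + ∑ j, v j ^ 2) := by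
  simp [EuclideanSpace.norm_eq, Fintype.sum_sum_type]

section Stacked

variable {ι κ : Type*} (Φ : Matrix ι κ ℝ) (y : ι → ℝ) (σ : ℝ)

/-- `A x - b` for `A = [Φ; σI]` and `b = [y; 0]`. -/
noncomputable def stackedResidual [Fintype κ] (x : κ → ℝ) : EuclideanSpace ℝ (ι ⊕ κ) :=
  WithLp.toLp 2 (Sum.elim (Φ *ᵥ x - y) (σ • x))

/-- The `i`-th column of `A = [Φ; σI]`. -/
noncomputable def stackedColumn [DecidableEq κ] (i : κ) : EuclideanSpace ℝ (ι ⊕ κ) :=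
  WithLp.toLp 2 (Sum.elim (Φ.col i) (Pi.single i σ))

theorem norm_stackedColumn [Fintype ι] [Fintype κ] [DecidableEq κ] (i : κ) :
    ‖stackedColumn Φ σ i‖ = √(∑ k, Φ k i ^ 2 + σ ^ 2) := by
  rw [stackedColumn, norm_toLp_sumElim]
  congr 2
  rw [Finset.sum_eq_single i (fun j _ hj => by simp [hj]) (by simp)]
  simp

theorem stackedResidual_add_single [Fintype κ] [DecidableEq κ] (x : κ → ℝ) (i : κ) (t : ℝ) :
    stackedResidual Φ y σ (x + Pi.single i t) =
      stackedResidual Φ y σ x + t • stackedColumn Φ σ i := by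
  ext (k | j)
  · simp [stackedResidual, stackedColumn, Matrix.mulVec_add, sub_add_eq_add_sub]
  · by_cases h : j = i <;> simp [stackedResidual, stackedColumn, h, mul_comm]

theorem norm_stackedResidual_update_zero_le [Fintype ι] [Fintype κ] [DecidableEq κ]
    (x : κ → ℝ) (i : κ) :
    ‖stackedResidual Φ y σ (update x i 0)‖
      ≤ ‖stackedResidual Φ y σ x‖ + ‖stackedColumn Φ σ i‖ * |x i| := by
  have h := stackedResidual_add_single Φ y σ (update x i 0) i (x i)
  rw [update_zero_add_single, ← sub_eq_iff_eq_add] at h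
  calc ‖stackedResidual Φ y σ (update x i 0)‖
      = ‖stackedResidual Φ y σ x - x i • stackedColumn Φ σ i‖ := by rw [h]
    _ ≤ ‖stackedResidual Φ y σ x‖ + ‖stackedColumn Φ σ i‖ * |x i| := by
      rw [← Real.norm_eq_abs, mul_comm, ← norm_smul]
      exact norm_sub_le _ _

end Stacked

theorem rsqrtObj_eq_norm_stackedResidual {m n : ℕ} (Φ : Matrix (Fin m) (Fin n) ℝ)
    (y : Fin m → ℝ) (σ : ℝ) (lam x : Fin n → ℝ) :
    rsqrtObj Φ y σ lam x = ‖stackedResidual Φ y σ x‖ + ∑ i, lam i * |x i| := by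
  simp [rsqrtObj, stackedResidual, norm_toLp_sumElim]

theorem safe_feature_elimination_general {m n : ℕ} (Φ : Matrix (Fin m) (Fin n) ℝ)
    (y : Fin m → ℝ) (σ : ℝ)
    (lam : Fin n → ℝ) (hlam : ∀ i, 0 ≤ lam i) (i : Fin n)
    (hi : (∑ k, (Φ k i) ^ 2) + σ ^ 2 < (lam i) ^ 2) :
    ∀ xstar : Fin n → ℝ,
      (∀ x : Fin n → ℝ, rsqrtObj Φ y σ lam xstar ≤ rsqrtObj Φ y σ lam x) →
      xstar i = 0 := by
  intro xstar hopt
  by_contra hx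
  have hcol : ‖stackedColumn Φ σ i‖ < lam i := by
    rw [norm_stackedColumn, ← Real.sqrt_sq (hlam i)]
    exact Real.sqrt_lt_sqrt (by positivity) hi
  have hlt := add_sum_mul_abs_update_zero_lt (‖stackedResidual Φ y σ ·‖) lam xstar
    (norm_stackedResidual_update_zero_le Φ y σ xstar i) hcol hx
  simp only [← rsqrtObj_eq_norm_stackedResidual] at hlt
  exact (hopt _).not_gt hlt

theorem safe_feature_elimination {m n : ℕ} (Φ : Matrix (Fin m) (Fin n) ℝ)
    (y : Fin m → ℝ) (hy : y ≠ 0) (σ : ℝ) (hσ : 0 < σ)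
    (lam : Fin n → ℝ) (hlam : ∀ i, 0 ≤ lam i) (i : Fin n)
    (hi : (∑ k, (Φ k i) ^ 2) + σ ^ 2 < (lam i) ^ 2) :
    ∀ xstar : Fin n → ℝ,
      (∀ x : Fin n → ℝ, rsqrtObj Φ y σ lam xstar ≤ rsqrtObj Φ y σ lam x) →
      xstar i = 0 :=
  safe_feature_elimination_general Φ y σ lam hlam i hi
end

section
/- In the regularized square-root LASSO problem min_x ||A x - b||_2 + Σ_i λ_i|x_i| with A = [Φ; σI], b = [y; 0], deleting from the problem all columns i with ||φ_i||_2² + σ² < λ_i² (i.e. restricting x to be zero on those coordinates) does not change the optimal value. -/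
section SqrtLasso

variable {ι E : Type*} [Fintype ι] [SeminormedAddCommGroup E] [NormedSpace ℝ E]

def sqrtLassoObj (a : ι → E) (b : E) (lam : ι → ℝ) (x : ι → ℝ) : ℝ :=
  ‖∑ i, x i • a i - b‖ + ∑ i, lam i * |x i|

theorem sqrtLassoObj_ite_zero_le (a : ι → E) (b : E) (lam : ι → ℝ) (p : ι → Prop)
    [DecidablePred p] (hp : ∀ i, p i → ‖a i‖ ≤ lam i) (x : ι → ℝ) :
    sqrtLassoObj a b lam (fun i => if p i then 0 else x i) ≤ sqrtLassoObj a b lam x := by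
  set x' : ι → ℝ := fun i => if p i then 0 else x i
  set d : ι → ℝ := fun i => if p i then x i else 0
  have hx : x = x' + d := by
    ext i; by_cases h : p i <;> simp [x', d, h]
  have habs : ∀ i, |x i| = |x' i| + |d i| := by
    intro i; by_cases h : p i <;> simp [x', d, h]
  have hd : ‖∑ i, d i • a i‖ ≤ ∑ i, lam i * |d i| := by
    refine (norm_sum_le _ _).trans (Finset.sum_le_sum fun i _ => ?_)
    rw [norm_smul, Real.norm_eq_abs, mul_comm]
    by_cases h : p i
    · exact mul_le_mul_of_nonneg_right (hp i h) (abs_nonneg _)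
    · simp [d, h]
  have hres : ∑ i, x' i • a i - b = (∑ i, x i • a i - b) - ∑ i, d i • a i := by
    simp only [hx, Pi.add_apply, add_smul, Finset.sum_add_distrib]; abel
  have hpen : ∑ i, lam i * |x i| = ∑ i, lam i * |x' i| + ∑ i, lam i * |d i| := by
    simp only [habs, mul_add, Finset.sum_add_distrib]
  unfold sqrtLassoObj
  rw [hres, hpen]
  linarith [norm_sub_le (∑ i, x i • a i - b) (∑ i, d i • a i)]

end SqrtLasso

section Augmented

variable {m n : ℕ} (Φ : Matrix (Fin m) (Fin n) ℝ) (σ : ℝ)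

/-- Column `i` of `A = [Φ; σ I]`. -/
noncomputable def augmentedColumn (i : Fin n) : EuclideanSpace ℝ (Fin m ⊕ Fin n) :=
  WithLp.toLp 2 (Sum.elim (fun k => Φ k i) (Pi.single i σ))

/-- The right-hand side `b = [y; 0]`. -/
noncomputable def augmentedTarget (y : Fin m → ℝ) : EuclideanSpace ℝ (Fin m ⊕ Fin n) :=
  WithLp.toLp 2 (Sum.elim y 0)

theorem norm_augmentedColumn (i : Fin n) :
    ‖augmentedColumn Φ σ i‖ = √(∑ k, Φ k i ^ 2 + σ ^ 2) := by
  simp [augmentedColumn, EuclideanSpace.norm_eq, Fintype.sum_sum_type, Pi.single_apply,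
    apply_ite (· ^ 2)]

theorem rsqrtObj_eq_sqrtLassoObj (y : Fin m → ℝ) (lam x : Fin n → ℝ) :
    rsqrtObj Φ y σ lam x = sqrtLassoObj (augmentedColumn Φ σ) (augmentedTarget y) lam x := by
  simp [rsqrtObj, sqrtLassoObj, augmentedColumn, augmentedTarget, EuclideanSpace.norm_eq,
    Fintype.sum_sum_type, Pi.single_apply, Matrix.mulVec, dotProduct, mul_comm]

end Augmented

theorem feature_elimination_preserves_value_general {m n : ℕ}
    (Φ : Matrix (Fin m) (Fin n) ℝ) (y : Fin m → ℝ) (σ : ℝ)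
    (lam : Fin n → ℝ) (hlam : ∀ i, 0 ≤ lam i) :
    sInf {v : ℝ | ∃ x : Fin n → ℝ, v = rsqrtObj Φ y σ lam x}
      = sInf {v : ℝ | ∃ x : Fin n → ℝ,
          (∀ i, (∑ k, (Φ k i) ^ 2) + σ ^ 2 < (lam i) ^ 2 → x i = 0) ∧
          v = rsqrtObj Φ y σ lam x} := by
  classical
  have hdominated : ∀ i, (∑ k, (Φ k i) ^ 2) + σ ^ 2 < (lam i) ^ 2 →
      ‖augmentedColumn Φ σ i‖ ≤ lam i := fun i hi => by
    rw [norm_augmentedColumn, ← Real.sqrt_sq (hlam i)]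
    exact Real.sqrt_le_sqrt hi.le
  apply csInf_eq_csInf_of_forall_exists_le
  · rintro _ ⟨x, rfl⟩
    have hle := sqrtLassoObj_ite_zero_le (augmentedColumn Φ σ) (augmentedTarget y) lam _
      hdominated x
    rw [← rsqrtObj_eq_sqrtLassoObj, ← rsqrtObj_eq_sqrtLassoObj] at hle
    exact ⟨_, ⟨_, fun i hi => if_pos hi, rfl⟩, hle⟩
  · rintro _ ⟨x, -, rfl⟩
    exact ⟨_, ⟨x, rfl⟩, le_rfl⟩

theorem feature_elimination_preserves_value {m n : ℕ}
    (Φ : Matrix (Fin m) (Fin n) ℝ) (y : Fin m → ℝ) (σ : ℝ) (hσ : 0 ≤ σ)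
    (lam : Fin n → ℝ) (hlam : ∀ i, 0 ≤ lam i) :
    sInf {v : ℝ | ∃ x : Fin n → ℝ, v = rsqrtObj Φ y σ lam x}
      = sInf {v : ℝ | ∃ x : Fin n → ℝ,
          (∀ i, (∑ k, (Φ k i) ^ 2) + σ ^ 2 < (lam i) ^ 2 → x i = 0) ∧
          v = rsqrtObj Φ y σ lam x} :=
  feature_elimination_preserves_value_general Φ y σ lam hlam
end

section
/- For the regularized square-root LASSO min_x ||Ax - b||_2 + Σ_i λ_i|x_i| with A = [Φ; σI] and b = [y; 0], y ≠ 0, the point x = 0 is optimal if and only if |φ_i^T y| ≤ λ_i ||y||_2 for all i = 1,…,n. -/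
lemma sqrt_le_lin (a Nv : ℝ) (ha : 0 ≤ a) (hN : 0 < Nv) :
    Real.sqrt a ≤ Real.sqrt Nv + (a - Nv) / (2 * Real.sqrt Nv) := by
  have hsa := Real.sq_sqrt ha
  have hsN := Real.sq_sqrt hN.le
  have hsNpos := Real.sqrt_pos.mpr hN
  rw [← sub_nonneg]
  have heq : Real.sqrt Nv + (a - Nv)/(2*Real.sqrt Nv) - Real.sqrt a
      = (a + Nv - Real.sqrt a * (2*Real.sqrt Nv)) / (2*Real.sqrt Nv) := by
    field_simp
    linear_combination 2 * hsN
  rw [heq]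
  apply div_nonneg _ (by positivity)
  nlinarith [sq_nonneg (Real.sqrt a - Real.sqrt Nv)]

set_option maxHeartbeats 1000000 in
theorem rsqrtLASSO_zero_optimal_iff {m n : ℕ}
    (Φ : Matrix (Fin m) (Fin n) ℝ) (y : Fin m → ℝ) (hy : y ≠ 0)
    (σ : ℝ) (hσ : 0 ≤ σ) (lam : Fin n → ℝ) (hlam : ∀ i, 0 ≤ lam i) :
    (∀ x : Fin n → ℝ, rsqrtObj Φ y σ lam 0 ≤ rsqrtObj Φ y σ lam x)
      ↔ ∀ i, |dot (fun k => Φ k i) y| ≤ lam i * norm2 y := by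
  classical
  set N : ℝ := ∑ k, y k ^ 2 with hNdef
  have hN : 0 < N := by
    obtain ⟨k, hk⟩ : ∃ k, y k ≠ 0 := by
      by_contra h; push_neg at h; exact hy (funext h)
    refine Finset.sum_pos' (fun i _ => sq_nonneg _) ⟨k, Finset.mem_univ k, by positivity⟩
  have hsN : (Real.sqrt N) ^ 2 = N := Real.sq_sqrt hN.le
  have hsNpos : 0 < Real.sqrt N := Real.sqrt_pos.mpr hN
  have hf0 : rsqrtObj Φ y σ lam 0 = Real.sqrt N := by
    simp [rsqrtObj, Matrix.mulVec_zero, hNdef]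
  have hnorm : norm2 y = Real.sqrt N := rfl
  constructor
  · intro hopt i
    rw [hnorm]
    by_contra hcon
    push_neg at hcon
    set c := dot (fun k => Φ k i) y with hc
    have hRnn : (0:ℝ) ≤ (∑ k, (Φ k i)^2) + σ^2 := by positivity
    set R : ℝ := (∑ k, (Φ k i)^2) + σ^2 with hR
    have hcabs : 0 < |c| :=
      lt_of_le_of_lt (mul_nonneg (hlam i) hsNpos.le) hcon
    have hRpos : 0 < R := by
      rcases hRnn.lt_or_eq with h | h
      · exact h
      · exfalso
        have hsum : (∑ k, (Φ k i)^2) = 0 := by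
          nlinarith [Finset.sum_nonneg (fun k (_ : k ∈ Finset.univ) => sq_nonneg (Φ k i)), sq_nonneg σ]
        have hPhi : ∀ k, Φ k i = 0 := by
          intro k
          have := (Finset.sum_eq_zero_iff_of_nonneg
            (fun k (_ : k ∈ Finset.univ) => sq_nonneg (Φ k i))).mp hsum k (Finset.mem_univ k)
          exact pow_eq_zero_iff (n := 2) (by norm_num) |>.mp this
        have : c = 0 := by simp [hc, dot, hPhi]
        rw [this] at hcabs; simp at hcabs
    set s : ℝ := if 0 ≤ c then 1 else -1 with hs
    have hsc : s * c = |c| := by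
      rcases le_or_gt 0 c with h | h
      · simp [hs, h, abs_of_nonneg h]
      · simp [hs, not_le.mpr h, abs_of_neg h]
    have hs2 : s^2 = 1 := by rw [hs]; split_ifs <;> norm_num
    have hsabs : |s| = 1 := by rw [hs]; split_ifs <;> norm_num
    set t : ℝ := (|c| - lam i * Real.sqrt N) / R with ht
    have htpos : 0 < t := div_pos (by linarith) hRpos
    set x : Fin n → ℝ := fun j => if j = i then t * s else 0 with hx
    have hmv : ∀ k, Φ.mulVec x k = t * s * Φ k i := by
      intro k
      simp only [Matrix.mulVec, dotProduct, hx]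
      rw [Finset.sum_eq_single i]
      · rw [if_pos rfl]; ring
      · intro j _ hj; rw [if_neg hj, mul_zero]
      · intro h; exact absurd (Finset.mem_univ i) h
    have hcc : (∑ k, Φ k i * y k) = c := rfl
    have h2 : (∑ j, (σ * x j)^2) = σ^2 * t^2 * s^2 := by
      rw [Finset.sum_eq_single i]
      · simp only [hx, if_pos rfl]; ring
      · intro j _ hj; simp [hx, hj]
      · intro h; exact absurd (Finset.mem_univ i) h
    have h1 : (∑ k, (Φ.mulVec x - y) k ^2)
        = t^2*s^2*(∑ k, (Φ k i)^2) - (2*t*s)*c + N := by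
      calc ∑ k, (Φ.mulVec x - y) k ^2
          = ∑ k, (t^2*s^2*(Φ k i)^2 - (2*t*s)*(Φ k i * y k) + y k^2) := by
            apply Finset.sum_congr rfl; intro k _
            simp only [Pi.sub_apply, hmv k]; ring
        _ = t^2*s^2*(∑ k, (Φ k i)^2) - (2*t*s)*c + N := by
            rw [Finset.sum_add_distrib, Finset.sum_sub_distrib,
              ← Finset.mul_sum, ← Finset.mul_sum, hcc]
    have hQ : (∑ k, (Φ.mulVec x - y) k ^2) + ∑ j, (σ * x j)^2
        = N - 2 * t * |c| + t^2 * R := by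
      rw [h1, h2, hR, hs2]
      linear_combination (-2*t) * hsc
    have hlx : (∑ j, lam j * |x j|) = lam i * t := by
      rw [Finset.sum_eq_single i]
      · simp only [hx, if_pos rfl]; rw [abs_mul, hsabs, abs_of_pos htpos]; ring
      · intro j _ hj; simp [hx, hj]
      · intro h; exact absurd (Finset.mem_univ i) h
    have hfx : rsqrtObj Φ y σ lam x = Real.sqrt (N - 2*t*|c| + t^2*R) + lam i * t := by
      rw [rsqrtObj, hQ, hlx]
    have hQnonneg : 0 ≤ N - 2*t*|c| + t^2*R := by
      rw [← hQ]; positivity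
    have hsqrt_le : Real.sqrt (N - 2*t*|c| + t^2*R)
        ≤ Real.sqrt N + (-(2*t*|c|) + t^2*R)/(2*Real.sqrt N) := by
      have h := sqrt_le_lin (N - 2*t*|c| + t^2*R) N hQnonneg hN
      have he : (N - 2*t*|c| + t^2*R - N) = (-(2*t*|c|) + t^2*R) := by ring
      rwa [he] at h
    have hkey := hopt x
    rw [hf0, hfx] at hkey
    have htR : t * R = |c| - lam i * Real.sqrt N := by
      rw [ht]; field_simp
    have hnum : (-(2*t*|c|) + t^2*R) + lam i * t * (2*Real.sqrt N) < 0 := by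
      have ht2 : t^2*R = t*(t*R) := by ring
      rw [ht2, htR]
      nlinarith [mul_pos htpos (by linarith : (0:ℝ) < |c| - lam i * Real.sqrt N)]
    have h3 : (-(2*t*|c|) + t^2*R)/(2*Real.sqrt N) + lam i * t
        = ((-(2*t*|c|) + t^2*R) + lam i * t * (2*Real.sqrt N)) / (2*Real.sqrt N) := by
      field_simp
    have h4 := div_neg_of_neg_of_pos hnum (by positivity : (0:ℝ) < 2*Real.sqrt N)
    rw [← h3] at h4
    linarith
  · intro hbound x
    rw [hf0, rsqrtObj]
    set c : ℝ := ∑ k, Φ.mulVec x k * y k with hc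
    set L : ℝ := ∑ j, lam j * |x j| with hL
    have hLnn : 0 ≤ L := Finset.sum_nonneg fun j _ => mul_nonneg (hlam j) (abs_nonneg _)
    have hcabs : |c| ≤ L * Real.sqrt N := by
      have hswap : c = ∑ j, x j * dot (fun k => Φ k j) y := by
        simp only [hc, Matrix.mulVec, dotProduct, dot, Finset.sum_mul, Finset.mul_sum]
        rw [Finset.sum_comm]
        apply Finset.sum_congr rfl; intro j _
        apply Finset.sum_congr rfl; intro k _
        ring
      calc |c| ≤ ∑ j, |x j * dot (fun k => Φ k j) y| := by
            rw [hswap]; exact Finset.abs_sum_le_sum_abs _ _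
        _ ≤ ∑ j, |x j| * (lam j * Real.sqrt N) := by
            apply Finset.sum_le_sum; intro j _
            rw [abs_mul]
            exact mul_le_mul_of_nonneg_left (by rw [← hnorm]; exact hbound j) (abs_nonneg _)
        _ = L * Real.sqrt N := by
            rw [hL, Finset.sum_mul]
            apply Finset.sum_congr rfl; intro j _; ring
    set Q := (∑ k, (Φ.mulVec x - y) k ^2) + ∑ j, (σ * x j)^2 with hQ
    have hQ0 : 0 ≤ Q := by positivity
    have hsQ : Real.sqrt Q ^ 2 = Q := Real.sq_sqrt hQ0
    have hCS : N - c ≤ Real.sqrt Q * Real.sqrt N := by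
      have h1 : (∑ k, (y k - Φ.mulVec x k) * y k)^2
          ≤ (∑ k, (y k - Φ.mulVec x k) ^2) * ∑ k, y k ^2 :=
        Finset.sum_mul_sq_le_sq_mul_sq _ _ _
      have h2 : (∑ k, (y k - Φ.mulVec x k) * y k) = N - c := by
        rw [hNdef, hc, ← Finset.sum_sub_distrib]
        apply Finset.sum_congr rfl; intro k _; ring
      have h3 : (∑ k, (y k - Φ.mulVec x k) ^2) ≤ Q := by
        rw [hQ]
        have he : (∑ k, (y k - Φ.mulVec x k) ^2) = ∑ k, (Φ.mulVec x - y) k ^2 := by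
          apply Finset.sum_congr rfl; intro k _; simp only [Pi.sub_apply]; ring
        rw [he]
        have : 0 ≤ ∑ j, (σ * x j)^2 := by positivity
        linarith
      rw [h2] at h1
      rcases le_or_gt (N - c) 0 with h | h
      · exact h.trans (by positivity)
      · have h4 : (N - c)^2 ≤ (Real.sqrt Q * Real.sqrt N)^2 := by
          rw [mul_pow, hsQ, hsN]
          calc (N - c)^2 ≤ (∑ k, (y k - Φ.mulVec x k) ^2) * N := h1
            _ ≤ Q * N := mul_le_mul_of_nonneg_right h3 hN.le
        nlinarith [h4, h, mul_nonneg (Real.sqrt_nonneg Q) (Real.sqrt_nonneg N)]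
    have habs : c ≤ L * Real.sqrt N := (le_abs_self c).trans hcabs
    nlinarith [Real.sqrt_nonneg Q, hsN, hsNpos, hCS, habs]
end
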